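/- arXiv:1602.05852 — 10 statements merged into one kernel-verified Lean document; each statement's English description precedes it below -/
import Mathlib

section
/- Let Π be a finite set of n ≥ 1 processes and let (G^r)_{r ≥ 1} be a sequence of directed graphs on Π, each containing all self-loops (p,p). Let r_1 < r_2 < ⋯ < r_n be rounds such that each G^{r_i} is rooted, and let X ⊆ Π satisfy X ∩ Root(G^{r_i}) ≠ ∅ for every 1 ≤ i ≤ n. Then for every p ∈ Π there exist q ∈ X and an index 1 ≤ i ≤ n such that q ∈ Root(G^{r_i}) and q ∈ CP(p, r_i, r_n). -/
/-- `R` is a root component of the directed graph `G`: a nonempty set of vertices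
that is strongly connected (any two members are joined by a directed path in `G`)
and has no incoming edge from outside. -/
def IsRootComp {V : Type*} (G : V → V → Prop) (R : Set V) : Prop :=
  R.Nonempty ∧ (∀ u ∈ R, ∀ v ∈ R, Relation.ReflTransGen G u v) ∧
    ∀ p q : V, G p q → q ∈ R → p ∈ R

/-- `(p, q)` is an edge of the compound graph `G^{a+1} ∘ G^{a+2} ∘ ⋯ ∘ G^b`
of the sequence `σ` of directed graphs (for `a = b`, this is the identity relation). -/
def ChainEdge {V : Type*} (σ : ℕ → V → V → Prop) (a b : ℕ) (p q : V) : Prop :=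
  ∃ f : ℕ → V, f a = p ∧ f b = q ∧ ∀ i, a ≤ i → i < b → σ (i + 1) (f i) (f (i + 1))

/-- The causal past of process `p` from round `b` down to round `a ≤ b`:
`{p}` if `a = b`, and the in-neighborhood of `p` in the compound graph
`G^{a+1} ∘ ⋯ ∘ G^b` if `a < b`. -/
def CP {V : Type*} (σ : ℕ → V → V → Prop) (p : V) (a b : ℕ) : Set V :=
  {q : V | ChainEdge σ a b q p}

lemma inclosed_contains_rootcomp {V : Type*} [Fintype V] (G : V → V → Prop)
    (S : Set V) (hS : S.Nonempty) (hcl : ∀ x y, G x y → y ∈ S → x ∈ S) :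
    ∃ R : Set V, IsRootComp G R ∧ R ⊆ S := by
  classical
  set C : Finset (Finset V) :=
    Finset.univ.filter
      (fun t => t.Nonempty ∧ (∀ x y, G x y → y ∈ t → x ∈ t) ∧ ∀ v ∈ t, v ∈ S) with hC
  have hCne : C.Nonempty := by
    refine ⟨Finset.univ.filter (· ∈ S), ?_⟩
    simp only [hC, Finset.mem_filter, Finset.mem_univ, true_and]
    obtain ⟨s, hs⟩ := hS
    exact ⟨⟨s, Finset.mem_filter.mpr ⟨Finset.mem_univ s, hs⟩⟩,
      fun x y hxy hy => hcl x y hxy hy, fun v hv => hv⟩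
  obtain ⟨t, htC, hmin⟩ := Finset.exists_min_image C Finset.card hCne
  simp only [hC, Finset.mem_filter, Finset.mem_univ, true_and] at htC
  obtain ⟨htne, htcl, htS⟩ := htC
  refine ⟨↑t, ⟨by exact_mod_cast htne.to_set, ?_, fun x y hxy hy => htcl x y hxy hy⟩,
    fun v hv => htS v hv⟩
  intro u hu v hv
  set A := t.filter (fun w => Relation.ReflTransGen G w v) with hA
  have hAt : A ⊆ t := Finset.filter_subset _ _
  have hAC : A ∈ C := by
    simp only [hC, Finset.mem_filter, Finset.mem_univ, true_and]
    refine ⟨⟨v, Finset.mem_filter.mpr ⟨hv, Relation.ReflTransGen.refl⟩⟩, ?_, fun w hw => htS w (hAt hw)⟩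
    intro x y hxy hy
    simp only [hA, Finset.mem_filter] at hy ⊢
    exact ⟨htcl x y hxy hy.1, Relation.ReflTransGen.head hxy hy.2⟩
  have hAeq : A = t := Finset.eq_of_subset_of_card_le hAt (hmin A hAC)
  have : u ∈ A := by rw [hAeq]; exact hu
  simp only [hA, Finset.mem_filter] at this
  exact this.2

set_option maxHeartbeats 1600000 in
/-- Information propagation through `n` rooted communication graphs: if the
graphs at rounds `r 0 < r 1 < ⋯ < r (n-1)` are all rooted with root components
`Rt i`, each intersecting a set `X`, then every process `p` has, by the end of
round `r (n-1)`, some `q ∈ X` in its causal past from a round `r i` at which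
`q` belonged to the root component. -/
theorem information_propagation {Proc : Type*} [Fintype Proc]
    (n : ℕ) (hcard : Fintype.card Proc = n) (hn : 1 ≤ n)
    (σ : ℕ → Proc → Proc → Prop) (hself : ∀ r, 1 ≤ r → ∀ p, σ r p p)
    (r : Fin n → ℕ) (hr1 : ∀ i, 1 ≤ r i) (hmono : StrictMono r)
    (Rt : Fin n → Set Proc)
    (hroot : ∀ i, IsRootComp (σ (r i)) (Rt i))
    (huniq : ∀ i, ∀ S : Set Proc, IsRootComp (σ (r i)) S → S = Rt i)
    (X : Set Proc) (hX : ∀ i, (X ∩ Rt i).Nonempty) :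
    ∀ p : Proc, ∃ q ∈ X, ∃ i : Fin n,
      q ∈ Rt i ∧ q ∈ CP σ p (r i) (r ⟨n - 1, by omega⟩) := by
  classical
  intro p
  set N : Fin n := ⟨n - 1, by omega⟩ with hN
  set T : Fin n → Set Proc := fun i => CP σ p (r i) (r N) with hT
  have hle : ∀ i : Fin n, r i ≤ r N := fun i =>
    hmono.monotone (Fin.le_def.mpr (by have := i.isLt; simp only [hN]; omega))
  have hpmem : ∀ i : Fin n, p ∈ T i := by
    intro i
    exact ⟨fun _ => p, rfl, rfl, fun k _ _ => hself (k + 1) (by omega) p⟩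
  -- extension step: an edge of round `r i` into `T i` lands in `T j` for `j < i`
  have hstep : ∀ i j : Fin n, (j : ℕ) < (i : ℕ) →
      ∀ x y, σ (r i) x y → y ∈ T i → x ∈ T j := by
    intro i j hji x y hxy hy
    obtain ⟨g, hg1, hg2, hg3⟩ := hy
    have hrji : r j < r i := hmono (by exact_mod_cast hji)
    refine ⟨fun k => if k < r i then x else g k, by simp [hrji], ?_, ?_⟩
    · simp only [if_neg (not_lt.mpr (hle i))]
      exact hg2
    · intro k hk1 hk2
      rcases lt_trichotomy (k + 1) (r i) with h | h | h
      · simp only [if_pos h, if_pos (by omega : k < r i)]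
        exact hself (k + 1) (by omega) x
      · simp only [if_pos (by omega : k < r i), if_neg (by omega : ¬ k + 1 < r i)]
        rw [h, hg1]
        exact hxy
      · simp only [if_neg (by omega : ¬ k < r i), if_neg (by omega : ¬ k + 1 < r i)]
        exact hg3 k (by omega) hk2
  have hmono' : ∀ i j : Fin n, (j : ℕ) < (i : ℕ) → T i ⊆ T j := by
    intro i j h x hx
    exact hstep i j h x x (hself (r i) (hr1 i) x) hx
  by_contra hcon
  push_neg at hcon
  -- from failure of the goal: every round causes strict growth of the causal past
  have hgrow : ∀ i : Fin n, ∃ x y, x ∉ T i ∧ y ∈ T i ∧ σ (r i) x y := by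
    intro i
    by_contra hcl
    push_neg at hcl
    have hclosed : ∀ x y, σ (r i) x y → y ∈ T i → x ∈ T i := by
      intro x y hxy hy
      by_contra hx
      exact (hcl x y hx hy) hxy
    obtain ⟨R, hR, hRT⟩ :=
      inclosed_contains_rootcomp (σ (r i)) (T i) ⟨p, hpmem i⟩ hclosed
    have hReq := huniq i R hR
    obtain ⟨q, hqX, hqR⟩ := hX i
    exact hcon q hqX i hqR (hRT (hReq ▸ hqR))
  set TF : Fin n → Finset Proc := fun i => (Set.toFinite (T i)).toFinset with hTF
  have hcstep : ∀ i j : Fin n, (j : ℕ) < (i : ℕ) → (TF i).card + 1 ≤ (TF j).card := by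
    intro i j h
    obtain ⟨x, y, hx, hy, hxy⟩ := hgrow i
    have hxj : x ∈ TF j := (Set.Finite.mem_toFinset _).mpr (hstep i j h x y hxy hy)
    have hsub : insert x (TF i) ⊆ TF j := by
      intro z hz
      rcases Finset.mem_insert.mp hz with hz | hz
      · exact hz ▸ hxj
      · exact (Set.Finite.mem_toFinset _).mpr (hmono' i j h ((Set.Finite.mem_toFinset _).mp hz))
    calc (TF i).card + 1 = (insert x (TF i)).card := by
          rw [Finset.card_insert_of_notMem (fun hc => hx ((Set.Finite.mem_toFinset _).mp hc))]
        _ ≤ (TF j).card := Finset.card_le_card hsub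
  have hcount : ∀ k, k ≤ n - 1 → k + 1 ≤ (TF ⟨n - 1 - k, by omega⟩).card := by
    intro k
    induction k with
    | zero =>
      intro _
      have : p ∈ TF ⟨n - 1 - 0, by omega⟩ := (Set.Finite.mem_toFinset _).mpr (hpmem _)
      exact Finset.card_pos.mpr ⟨p, this⟩
    | succ k ih =>
      intro hk
      have h1 := ih (by omega)
      have h2 := hcstep ⟨n - 1 - k, by omega⟩ ⟨n - 1 - (k + 1), by omega⟩ (by simp; omega)
      omega
  have hzero : 0 < n := by omega
  obtain ⟨q, hqX, hqR⟩ := hX ⟨0, hzero⟩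
  refine absurd ?_ (hcon q hqX ⟨0, hzero⟩ hqR)
  have hfull : n ≤ (TF ⟨0, hzero⟩).card := by
    have h := hcount (n - 1) (le_refl _)
    have he : (⟨n - 1 - (n - 1), by omega⟩ : Fin n) = ⟨0, hzero⟩ := by simp
    rw [he] at h
    omega
  have hle2 : (TF ⟨0, hzero⟩).card ≤ n := le_of_le_of_eq (Finset.card_le_univ _) hcard
  have h2 : TF ⟨0, hzero⟩ = Finset.univ :=
    (Finset.card_eq_iff_eq_univ _).mp (by rw [hcard]; omega)
  have hq : q ∈ TF ⟨0, hzero⟩ := h2 ▸ Finset.mem_univ q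
  exact (Set.Finite.mem_toFinset _).mp hq
end

section
/- Let Π be a finite set of n ≥ 1 processes and let (G^r)_{r ≥ 1} be a sequence of directed graphs on Π, each containing all self-loops (p,p). Let 1 ≤ i ≤ n and let r_1 < r_2 < ⋯ < r_i be rounds such that each G^{r_j} is rooted, and let X ⊆ Π satisfy X ∩ Root(G^{r_j}) ≠ ∅ for every 1 ≤ j ≤ i. Then the set S^{r_i} = {p ∈ Π : ∃ q ∈ X, ∃ j ∈ {1,…,i} with q ∈ Root(G^{r_j}) and q ∈ CP(p, r_j, r_i)} has cardinality at least i. -/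
open Relation

lemma chainEdge_refl {V : Type*} {σ : ℕ → V → V → Prop} (hs : ∀ i p, σ (i+1) p p)
    (a b : ℕ) (p : V) : ChainEdge σ a b p p :=
  ⟨fun _ => p, rfl, rfl, fun i _ _ => hs i p⟩

lemma chainEdge_trans {V : Type*} {σ : ℕ → V → V → Prop} {a b c : ℕ}
    (hab : a ≤ b) (hbc : b ≤ c) {q p s : V}
    (h1 : ChainEdge σ a b q p) (h2 : ChainEdge σ b c p s) : ChainEdge σ a c q s := by
  obtain ⟨f1, hf1a, hf1b, hf1⟩ := h1
  obtain ⟨f2, hf2b, hf2c, hf2⟩ := h2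
  refine ⟨fun i => if i ≤ b then f1 i else f2 i, by simp [hab, hf1a], ?_, ?_⟩
  · rcases eq_or_lt_of_le hbc with h | h
    · subst h; simpa using hf1b.trans (hf2b.symm.trans hf2c)
    · simp [not_le.2 h, hf2c]
  · intro i hi hic
    by_cases h : i < b
    · have h1' : i ≤ b := h.le
      have h2' : i + 1 ≤ b := h
      simpa [h1', h2'] using hf1 i hi h
    · push_neg at h
      have h2' : ¬ (i + 1 ≤ b) := by omega
      have hval : (if i ≤ b then f1 i else f2 i) = f2 i := by
        rcases eq_or_lt_of_le h with h' | h'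
        · subst h'; simp [hf1b, hf2b]
        · simp [not_le.2 h']
      simpa [h2', hval] using hf2 i h hic

lemma chainEdge_single {V : Type*} {σ : ℕ → V → V → Prop} (hs : ∀ i p, σ (i+1) p p)
    {a b : ℕ} (hab : a < b) {p s : V} (hedge : σ b p s) : ChainEdge σ a b p s := by
  refine ⟨fun i => if i < b then p else s, by simp [hab], by simp, ?_⟩
  intro i hi hib
  by_cases h : i + 1 < b
  · simpa [hib, h] using hs i p
  · have : i + 1 = b := by omega
    simp only [hib, if_pos, this]
    simpa [this] using hedge

lemma rtg_flip {V : Type*} {G : V → V → Prop} {a b : V} :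
    ReflTransGen (fun x y => G y x) a b ↔ ReflTransGen G b a :=
  reflTransGen_swap

lemma exists_source {V : Type*} [Fintype V] [Nonempty V] (G : V → V → Prop) :
    ∃ u : V, ∀ v, ReflTransGen G v u → ReflTransGen G u v := by
  classical
  set H : V → V → Prop := fun x y => G y x with hH
  obtain ⟨u, -, hu⟩ := Finset.exists_min_image (Finset.univ : Finset V)
    (fun x => {w | ReflTransGen H x w}.ncard) ⟨Classical.arbitrary V, Finset.mem_univ _⟩
  refine ⟨u, fun v hvu => ?_⟩
  have huv : ReflTransGen H u v := rtg_flip.2 hvu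
  by_contra hvu'
  have hnot : ¬ ReflTransGen H v u := fun h => hvu' (rtg_flip.1 h)
  have hsub : {w | ReflTransGen H v w} ⊂ {w | ReflTransGen H u w} := by
    constructor
    · intro w hw; exact huv.trans hw
    · intro hsup
      exact hnot (hsup (show u ∈ {w | ReflTransGen H u w} from ReflTransGen.refl))
  have := Set.ncard_lt_ncard hsub (Set.toFinite _)
  exact absurd (hu v (Finset.mem_univ v)) (by omega)

lemma rtg_subtype_proj {V : Type*} {G : V → V → Prop} {B : Set V} {x y : ↥B}
    (h : ReflTransGen (fun a b : ↥B => G a b) x y) : ReflTransGen G x y := by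
  induction h with
  | refl => exact ReflTransGen.refl
  | tail _ he ih => exact ih.tail he

lemma root_reaches_all {V : Type*} [Fintype V] {G : V → V → Prop} {R : Set V}
    (hR : IsRootComp G R) (huniq : ∀ S, IsRootComp G S → S = R) (v : V) :
    ∃ u ∈ R, ReflTransGen G u v := by
  classical
  by_contra hv
  push_neg at hv
  set B : Set V := {w | ∀ u ∈ R, ¬ ReflTransGen G u w} with hB
  have hvB : v ∈ B := hv
  have hclosed : ∀ x y, G x y → y ∈ B → x ∈ B := by
    intro x y hxy hy u hu hux
    exact hy u hu (hux.tail hxy)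
  have hpath : ∀ p w, ReflTransGen G p w → ∀ hw : w ∈ B,
      ∃ hp : p ∈ B, ReflTransGen (fun a b : ↥B => G a b) ⟨p, hp⟩ ⟨w, hw⟩ := by
    intro p w h
    induction h with
    | refl => exact fun hw => ⟨hw, ReflTransGen.refl⟩
    | @tail y w hpy hyw ih =>
      intro hw
      obtain ⟨hy, hpth⟩ := ih (hclosed y w hyw hw)
      exact ⟨hy, hpth.tail hyw⟩
  haveI : Nonempty ↥B := ⟨⟨v, hvB⟩⟩
  obtain ⟨u, hu⟩ := exists_source (fun a b : ↥B => G a b)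
  set R' : Set V := {w | ReflTransGen G (u : V) w ∧ ReflTransGen G w (u : V)} with hR'
  have hRC : IsRootComp G R' := by
    refine ⟨⟨u, ReflTransGen.refl, ReflTransGen.refl⟩, ?_, ?_⟩
    · intro x hx y hy
      exact hx.2.trans hy.1
    · intro p q hpq hq
      have hpu : ReflTransGen G p (u : V) := (ReflTransGen.single hpq).trans hq.2
      obtain ⟨hp, hpth⟩ := hpath p (u : V) hpu u.2
      have := hu ⟨p, hp⟩ (by simpa using hpth)
      exact ⟨rtg_subtype_proj this, hpu⟩
  have : R' = R := huniq R' hRC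
  have huR : (u : V) ∈ R := this ▸ ⟨ReflTransGen.refl, ReflTransGen.refl⟩
  exact u.2 (u : V) huR ReflTransGen.refl

lemma rtg_closure {V : Type*} {G : V → V → Prop} {A : Set V}
    (hA : ∀ x y, x ∈ A → G x y → y ∈ A) {x v : V} (hx : x ∈ A)
    (h : ReflTransGen G x v) : v ∈ A := by
  induction h with
  | refl => exact hx
  | tail _ he ih => exact hA _ _ ih he

lemma key_induction {Proc : Type*} [Fintype Proc]
    (σ : ℕ → Proc → Proc → Prop) (hself : ∀ i p, σ (i+1) p p)
    (X : Set Proc) (i : ℕ) (r : ℕ → ℕ) (Rt : ℕ → Set Proc)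
    (hmono : ∀ j1 j2, j1 < j2 → j2 < i → r j1 < r j2)
    (hroot : ∀ j < i, IsRootComp (σ (r j)) (Rt j))
    (huniq : ∀ j < i, ∀ S, IsRootComp (σ (r j)) S → S = Rt j)
    (hX : ∀ j < i, (X ∩ Rt j).Nonempty) :
    ∀ k, 1 ≤ k → k ≤ i → k ≤ Fintype.card Proc →
      k ≤ Set.ncard {p | ∃ q ∈ X, ∃ j < k, q ∈ Rt j ∧ q ∈ CP σ p (r j) (r (k-1))} := by
  intro k
  induction k with
  | zero => omega
  | succ k ih =>
    intro _ hki hkc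
    rcases Nat.eq_zero_or_pos k with hk0 | hk1
    · -- base case k+1 = 1
      subst hk0
      obtain ⟨q, hqX, hqR⟩ := hX 0 (by omega)
      have hq : q ∈ {p | ∃ q' ∈ X, ∃ j < 1, q' ∈ Rt j ∧ q' ∈ CP σ p (r j) (r 0)} :=
        ⟨q, hqX, 0, by omega, hqR, chainEdge_refl hself _ _ q⟩
      calc 1 = Set.ncard ({q} : Set Proc) := by simp
        _ ≤ _ := Set.ncard_le_ncard (by simpa using hq) (Set.toFinite _)
    · -- inductive step
      have hk_lt_i : k < i := by omega
      set a := r (k-1) with ha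
      set b := r k with hb
      have hab : a < b := hmono (k-1) k (by omega) hk_lt_i
      set A : Set Proc := {p | ∃ q ∈ X, ∃ j < k, q ∈ Rt j ∧ q ∈ CP σ p (r j) a} with hA
      set A' : Set Proc := {p | ∃ q ∈ X, ∃ j < k+1, q ∈ Rt j ∧ q ∈ CP σ p (r j) b} with hA'
      have hrj_le_a : ∀ j < k, r j ≤ a := by
        intro j hj
        rcases Nat.lt_or_ge j (k-1) with h | h
        · exact (hmono j (k-1) h (by omega)).le
        · have : j = k - 1 := by omega
          simp [this, ha]
      have hcard : k ≤ Set.ncard A := ih (by omega) (by omega) (by omega)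
      -- F1 : propagation
      have F1 : ∀ p s, p ∈ A → ChainEdge σ a b p s → s ∈ A' := by
        rintro p s ⟨q, hqX, j, hj, hqR, hchain⟩ hstep
        exact ⟨q, hqX, j, by omega, hqR,
          chainEdge_trans (hrj_le_a j hj) hab.le hchain hstep⟩
      have hAsub : A ⊆ A' := fun p hp =>
        F1 p p hp (chainEdge_refl hself _ _ p)
      -- show k+1 ≤ ncard A'
      show k + 1 ≤ Set.ncard A'
      by_cases hU : ∃ s, s ∉ A ∧ ∃ p ∈ A, ChainEdge σ a b p s
      · obtain ⟨s, hsA, p, hpA, hstep⟩ := hU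
        have : insert s A ⊆ A' := by
          intro x hx
          rcases Set.mem_insert_iff.1 hx with h | h
          · exact h ▸ F1 p s hpA hstep
          · exact hAsub h
        calc k + 1 ≤ Set.ncard (insert s A) := by
              rw [Set.ncard_insert_of_notMem hsA (Set.toFinite _)]; omega
          _ ≤ Set.ncard A' := Set.ncard_le_ncard this (Set.toFinite _)
      · push_neg at hU
        -- A is closed under edges of σ b
        have hclosedA : ∀ x y, x ∈ A → σ b x y → y ∈ A := by
          intro x y hx hxy
          by_contra hy
          exact hU y hy x hx (chainEdge_single hself hab hxy)
        -- two subcases on Rt k ∩ A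
        obtain ⟨q, hqX, hqR⟩ := hX k hk_lt_i
        have hqA' : q ∈ A' := ⟨q, hqX, k, by omega, hqR, chainEdge_refl hself _ _ q⟩
        by_cases hRtA : (Rt k ∩ A).Nonempty
        · -- A is all of Proc
          obtain ⟨x, hxR, hxA⟩ := hRtA
          have hAuniv : ∀ v : Proc, v ∈ A := by
            intro v
            obtain ⟨u, huR, huv⟩ := root_reaches_all (hroot k hk_lt_i)
              (huniq k hk_lt_i) v
            have hxu : Relation.ReflTransGen (σ b) x u :=
              (hroot k hk_lt_i).2.1 x hxR u huR
            exact rtg_closure hclosedA hxA (hxu.trans huv)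
          have : A = Set.univ := Set.eq_univ_of_forall hAuniv
          have hA'univ : A' = Set.univ :=
            Set.eq_univ_of_forall fun v => hAsub (this ▸ Set.mem_univ v)
          rw [hA'univ, Set.ncard_univ, Nat.card_eq_fintype_card]
          omega
        · -- q is a new element
          have hqnA : q ∉ A := fun h => hRtA ⟨q, hqR, h⟩
          have : insert q A ⊆ A' := by
            intro x hx
            rcases Set.mem_insert_iff.1 hx with h | h
            · exact h ▸ hqA'
            · exact hAsub h
          calc k + 1 ≤ Set.ncard (insert q A) := by
                rw [Set.ncard_insert_of_notMem hqnA (Set.toFinite _)]; omega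
            _ ≤ Set.ncard A' := Set.ncard_le_ncard this (Set.toFinite _)

/-- Inductive step of the information-propagation lemma: after `i` rooted
communication graphs at rounds `r 0 < ⋯ < r (i-1)`, whose root components `Rt j`
each intersect `X`, the set `S^{r_i}` of processes that have some `q ∈ X` in their
causal past from a round `r j` at which `q` was a root member has cardinality
at least `i`. -/
theorem information_propagation_step {Proc : Type*} [Fintype Proc]
    (n : ℕ) (hcard : Fintype.card Proc = n) (hn : 1 ≤ n)
    (σ : ℕ → Proc → Proc → Prop) (hself : ∀ r, 1 ≤ r → ∀ p, σ r p p)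
    (i : ℕ) (hi1 : 1 ≤ i) (hin : i ≤ n)
    (r : Fin i → ℕ) (hr1 : ∀ j, 1 ≤ r j) (hmono : StrictMono r)
    (Rt : Fin i → Set Proc)
    (hroot : ∀ j, IsRootComp (σ (r j)) (Rt j))
    (huniq : ∀ j, ∀ S : Set Proc, IsRootComp (σ (r j)) S → S = Rt j)
    (X : Set Proc) (hX : ∀ j, (X ∩ Rt j).Nonempty) :
    i ≤ Set.ncard {p : Proc | ∃ q ∈ X, ∃ j : Fin i,
      q ∈ Rt j ∧ q ∈ CP σ p (r j) (r ⟨i - 1, by omega⟩)} := by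
  classical
  have hself' : ∀ k (p : Proc), σ (k+1) p p := fun k p => hself (k+1) (by omega) p
  set r' : ℕ → ℕ := fun j => if h : j < i then r ⟨j, h⟩ else 0 with hr'
  set Rt' : ℕ → Set Proc := fun j => if h : j < i then Rt ⟨j, h⟩ else ∅ with hRt'
  have hr'eq : ∀ j (hj : j < i), r' j = r ⟨j, hj⟩ := fun j hj => dif_pos hj
  have hRt'eq : ∀ j (hj : j < i), Rt' j = Rt ⟨j, hj⟩ := fun j hj => dif_pos hj
  have hi1' : i - 1 < i := by omega
  have hkey := key_induction σ hself' X i r' Rt'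
    (fun j1 j2 h1 h2 => by
      rw [hr'eq j1 (by omega), hr'eq j2 h2]
      exact hmono (show (⟨j1, by omega⟩ : Fin i) < ⟨j2, h2⟩ from h1))
    (fun j hj => by rw [hRt'eq j hj, hr'eq j hj]; exact hroot _)
    (fun j hj S hS => by
      rw [hRt'eq j hj]; rw [hr'eq j hj] at hS; exact huniq _ S hS)
    (fun j hj => by rw [hRt'eq j hj]; exact hX _)
    i hi1 le_rfl (by omega)
  have hri : r' (i-1) = r ⟨i-1, hi1'⟩ := hr'eq (i-1) hi1'
  have hseteq : {p : Proc | ∃ q ∈ X, ∃ j : Fin i,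
      q ∈ Rt j ∧ q ∈ CP σ p (r j) (r ⟨i - 1, by omega⟩)} =
      {p : Proc | ∃ q ∈ X, ∃ j < i, q ∈ Rt' j ∧ q ∈ CP σ p (r' j) (r' (i-1))} := by
    ext p
    simp only [Set.mem_setOf_eq]
    constructor
    · rintro ⟨q, hqX, j, hqR, hqCP⟩
      refine ⟨q, hqX, j.1, j.2, ?_, ?_⟩
      · rw [hRt'eq j.1 j.2]; exact hqR
      · rw [hr'eq j.1 j.2, hri]; exact hqCP
    · rintro ⟨q, hqX, j, hj, hqR, hqCP⟩
      rw [hRt'eq j hj] at hqR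
      rw [hr'eq j hj, hri] at hqCP
      exact ⟨q, hqX, ⟨j, hj⟩, hqR, hqCP⟩
  rw [hseteq]
  exact hkey
end

section
/- Let n > 2 and let G and G' be rooted directed graphs on a common vertex set V of n vertices, both containing all self-loops, with Root(G) = R and Root(G') = R'. Let R'' be any subset of V with R'' ≠ R and R'' ≠ R'. Then there exists a finite sequence of directed graphs G = G_1, G_2, …, G_k = G' on V, all containing all self-loops, such that every G_i is rooted, Root(G_i) ≠ R'' for every i, and for every 1 ≤ i < k the graphs G_i and G_{i+1} differ in exactly one (non-self-loop) edge. -/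
/-- The edge set of a directed graph given as a relation. -/
def edgeSet {V : Type*} (G : V → V → Prop) : Set (V × V) :=
  {e : V × V | G e.1 e.2}

/-- Two directed graphs on the same vertex set differ in exactly one
(non-self-loop) edge: the symmetric difference of their edge sets is a
single edge `(u, v)` with `u ≠ v`. -/
def DifferOneEdge {V : Type*} (G G' : V → V → Prop) : Prop :=
  ∃ e : V × V, e.1 ≠ e.2 ∧ symmDiff (edgeSet G) (edgeSet G') = {e}

/-!
Write `z*` (`outStar z`) for the graph with all self-loops and every edge out of `z`. Pick
`r ∈ R` and `r' ∈ R'` such that no set containing `r` inside `R` (resp. `r'` inside `R'`) equals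
`R''`, and a vertex `s` such that no set containing `s` inside a pair `{s, a}` equals `R''`; the
latter is where `n > 2` enters, for `R'' = V`. Then walk
`G → G ⊔ r* → r* → r* ⊔ s* → s* → s* ⊔ r'* → r'* → G' ⊔ r'* → G'`, one edge at a time.
On each leg the graphs lie between some `A` rooted at `z` and `H ⊔ z*`, so they are rooted at `z`
and their root lies between `{z}` and the set of vertices reaching `z` in `H`, which is `R`, `R'`
or contained in a pair `{z, s}`.
-/

open Relation

section

variable {V : Type*}

section Walks

variable {P : (V → V → Prop) → Prop}

theorem DifferOneEdge.symm {A B : V → V → Prop} (h : DifferOneEdge A B) : DifferOneEdge B A :=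
  let ⟨e, hne, he⟩ := h
  ⟨e, hne, symmDiff_comm (edgeSet A) (edgeSet B) ▸ he⟩

theorem differOneEdge_sup_edge {A : V → V → Prop} {p q : V} (hpq : p ≠ q) (hA : ¬ A p q) :
    DifferOneEdge A (A ⊔ fun a b => a = p ∧ b = q) := by
  refine ⟨(p, q), hpq, ?_⟩
  ext ⟨a, b⟩
  simp only [Set.mem_symmDiff, edgeSet, Set.mem_ofPred_eq, Set.mem_singleton_iff, Prod.mk.injEq,
    Pi.sup_apply, sup_Prop_eq]
  constructor
  · rintro (⟨h, hn⟩ | ⟨h | h, hn⟩)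
    exacts [absurd (Or.inl h) hn, absurd h hn, h]
  · rintro ⟨rfl, rfl⟩
    exact Or.inr ⟨Or.inr ⟨rfl, rfl⟩, hA⟩

variable (P) in
def OneEdgeStep (A B : V → V → Prop) : Prop :=
  P A ∧ P B ∧ DifferOneEdge A B

instance : Std.Symm (OneEdgeStep P) where
  symm _ _ h := ⟨h.2.1, h.1, h.2.2.symm⟩

theorem exists_seq_of_reflTransGen_oneEdgeStep {A B : V → V → Prop} (hA : P A)
    (h : ReflTransGen (OneEdgeStep P) A B) :
    ∃ (k : ℕ) (Gs : ℕ → V → V → Prop), Gs 0 = A ∧ Gs k = B ∧ (∀ i ≤ k, P (Gs i)) ∧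
      ∀ i < k, DifferOneEdge (Gs i) (Gs (i + 1)) := by
  induction h with
  | refl => exact ⟨0, fun _ => A, rfl, rfl, fun _ _ => hA, fun _ hi => absurd hi (by omega)⟩
  | @tail B C _ hBC ih =>
    obtain ⟨k, Gs, h0, hk, hP, hd⟩ := ih
    refine ⟨k + 1, Function.update Gs (k + 1) C, by simpa using h0, by simp, fun i hi => ?_,
      fun i hi => ?_⟩
    · rcases (show i ≤ k ∨ i = k + 1 by omega) with hi | rfl
      · simpa [Function.update_of_ne (show i ≠ k + 1 by omega)] using hP i hi
      · simpa using hBC.2.1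
    · rcases (show i < k ∨ i = k by omega) with hi | rfl
      · simpa [Function.update_of_ne (show i ≠ k + 1 by omega),
          Function.update_of_ne (show i + 1 ≠ k + 1 by omega)] using hd i hi
      · simpa [Function.update_of_ne (show i ≠ i + 1 by omega), hk] using hBC.2.2

theorem reflTransGen_oneEdgeStep_of_le [Finite V] {A B : V → V → Prop} (hA : ∀ p, A p p)
    (hAB : A ≤ B) (hP : ∀ C, A ≤ C → C ≤ B → P C) : ReflTransGen (OneEdgeStep P) A B := by
  induction A using WellFoundedGT.induction with
  | _ A ih =>
    by_cases hBA : B ≤ A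
    · rw [le_antisymm hAB hBA]
    obtain ⟨p, q, hBpq, hApq⟩ : ∃ p q, B p q ∧ ¬ A p q := by
      by_contra! h
      exact hBA fun p q => h p q
    have hpq : p ≠ q := by
      rintro rfl
      exact hApq (hA p)
    set A' : V → V → Prop := A ⊔ fun a b => a = p ∧ b = q
    have hA'B : A' ≤ B := sup_le hAB (by rintro a b ⟨rfl, rfl⟩; exact hBpq)
    have hAA' : A < A' := lt_of_le_not_ge le_sup_left fun h => hApq (h p q (Or.inr ⟨rfl, rfl⟩))
    exact .head ⟨hP A le_rfl hAB, hP A' hAA'.le hA'B, differOneEdge_sup_edge hpq hApq⟩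
      (ih A' hAA' (fun a => Or.inl (hA a)) hA'B fun C hA'C hCB => hP C (hAA'.le.trans hA'C) hCB)

end Walks

section Roots

variable {G H C : V → V → Prop}

def RootedBy (G : V → V → Prop) (r : V) : Prop :=
  ∀ v, ReflTransGen G r v

def rootSet (G : V → V → Prop) (r : V) : Set V :=
  {x | ReflTransGen G x r}

theorem RootedBy.mono {r : V} (hG : RootedBy G r) (hGH : G ≤ H) : RootedBy H r :=
  fun v => ReflTransGen.mono hGH _ _ (hG v)

theorem mem_of_reflTransGen_of_backClosed {S : Set V} (hS : ∀ p q, G p q → q ∈ S → p ∈ S)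
    {p q : V} (h : ReflTransGen G p q) (hq : q ∈ S) : p ∈ S := by
  induction h with
  | refl => exact hq
  | tail _ hbc ih => exact ih (hS _ _ hbc hq)

theorem isRootComp_rootSet {r : V} (hr : RootedBy G r) : IsRootComp G (rootSet G r) :=
  ⟨⟨r, .refl⟩, fun _ hu v _ => hu.trans (hr v), fun _ _ hpq hq => .head hpq hq⟩

theorem eq_rootSet_of_isRootComp {r : V} {S : Set V} (hr : RootedBy G r) (hS : IsRootComp G S) :
    S = rootSet G r := by
  obtain ⟨⟨s, hs⟩, hconn, hcl⟩ := hS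
  have hrS : r ∈ S := mem_of_reflTransGen_of_backClosed hcl (hr s) hs
  exact Set.Subset.antisymm (fun x hx => hconn x hx r hrS)
    fun x hx => mem_of_reflTransGen_of_backClosed hcl hx hrS

/-- A minimal nonempty back-closed subset is a root component. -/
theorem exists_isRootComp_subset [Finite V] {W : Set V} (hW : W.Nonempty)
    (hcl : ∀ p q, G p q → q ∈ W → p ∈ W) : ∃ S ⊆ W, IsRootComp G S := by
  obtain ⟨M, hMW, hM⟩ :=
    (Set.toFinite {S : Set V | S.Nonempty ∧ ∀ p q, G p q → q ∈ S → p ∈ S}).exists_le_minimal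
      (a := W) ⟨hW, hcl⟩
  refine ⟨M, hMW, hM.prop.1, fun u hu v hv => ?_, hM.prop.2⟩
  have hsub := hM.eq_of_subset (t := {x ∈ M | ReflTransGen G x v})
    ⟨⟨v, hv, .refl⟩, fun p q hpq hq => ⟨hM.prop.2 p q hpq hq.1, .head hpq hq.2⟩⟩
    (Set.sep_subset _ _)
  exact (hsub.ge hu).2

theorem rootedBy_of_unique [Finite V] {R : Set V} (hRu : ∀ S, IsRootComp G S → S = R) {r : V}
    (hr : r ∈ R) : RootedBy G r := fun v => by
  obtain ⟨S, hSv, hS⟩ := exists_isRootComp_subset (G := G) (W := {x | ReflTransGen G x v})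
    ⟨v, .refl⟩ fun p q hpq hq => .head hpq hq
  exact hSv (hRu S hS ▸ hr)

def outStar (z : V) : V → V → Prop := fun p q => p = q ∨ p = z

theorem rootedBy_outStar (z : V) : RootedBy (outStar z) z :=
  fun _ => .single (Or.inr rfl)

theorem rootSet_subset_of_le_sup_outStar {z : V} (hC : C ≤ H ⊔ outStar z) :
    rootSet C z ⊆ rootSet H z := fun x hx => by
  induction hx using ReflTransGen.head_induction_on with
  | refl => exact .refl
  | head hxy _ ih =>
    rcases hC _ _ hxy with h | rfl | rfl
    exacts [.head h ih, ih, .refl]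

theorem rootSet_outStar_subset (r s : V) : rootSet (outStar s) r ⊆ {r, s} := fun x hx => by
  induction hx using ReflTransGen.head_induction_on with
  | refl => exact .inl rfl
  | head hxy _ ih =>
    rcases hxy with rfl | rfl
    exacts [ih, .inr rfl]

end Roots

section Avoiding

variable {T : Set V}

def IsRootedAvoiding (T : Set V) (G : V → V → Prop) : Prop :=
  (∀ p, G p p) ∧ ∃ R : Set V, IsRootComp G R ∧ (∀ S : Set V, IsRootComp G S → S = R) ∧ R ≠ T

theorem isRootedAvoiding_of_rootedBy {G : V → V → Prop} {z : V} (hG : ∀ p, G p p)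
    (hz : RootedBy G z) (hT : rootSet G z ≠ T) : IsRootedAvoiding T G :=
  ⟨hG, _, isRootComp_rootSet hz, fun _ hS => eq_rootSet_of_isRootComp hz hS, hT⟩

/-- Every graph between `A` and `H ⊔ outStar z` is rooted at `z`, and its root is squeezed
between `{z}` and `rootSet H z`. -/
theorem reflTransGen_sup_outStar [Finite V] {A H : V → V → Prop} {z : V} (hA : ∀ p, A p p)
    (hAz : RootedBy A z) (hAH : A ≤ H ⊔ outStar z) (hz : z ∈ T → ¬ T ⊆ rootSet H z) :
    ReflTransGen (OneEdgeStep (IsRootedAvoiding T)) A (H ⊔ outStar z) :=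
  reflTransGen_oneEdgeStep_of_le hA hAH fun _ hAC hCH =>
    isRootedAvoiding_of_rootedBy (fun p => hAC p p (hA p)) (hAz.mono hAC) fun hCT =>
      hz (hCT ▸ .refl) (hCT ▸ rootSet_subset_of_le_sup_outStar hCH)

theorem reflTransGen_outStar_of_rootedBy [Finite V] {G : V → V → Prop} {r : V}
    (hG : ∀ p, G p p) (hr : RootedBy G r) (hT : r ∈ T → ¬ T ⊆ rootSet G r) :
    ReflTransGen (OneEdgeStep (IsRootedAvoiding T)) G (outStar r) :=
  (reflTransGen_sup_outStar hG hr le_sup_left hT).trans <| symm <|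
    reflTransGen_sup_outStar (fun _ => .inl rfl) (rootedBy_outStar r) le_sup_right hT

theorem reflTransGen_outStar_outStar [Finite V] {r s : V} (hr : r ∈ T → ¬ T ⊆ {r})
    (hs : s ∈ T → ¬ T ⊆ {s, r}) :
    ReflTransGen (OneEdgeStep (IsRootedAvoiding T)) (outStar r) (outStar s) := by
  have hr' : r ∈ T → ¬ T ⊆ rootSet (outStar s) r := fun hrT hTs => by
    by_cases hsT : s ∈ T
    · exact hs hsT fun x hx => by grind [rootSet_outStar_subset r s (hTs hx)]
    · exact hr hrT fun x hx => by grind [rootSet_outStar_subset r s (hTs hx)]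
  have hs' : s ∈ T → ¬ T ⊆ rootSet (outStar r) s :=
    fun hsT hTr => hs hsT (hTr.trans (rootSet_outStar_subset s r))
  refine (reflTransGen_sup_outStar (fun _ => .inl rfl) (rootedBy_outStar r) le_sup_right
    hr').trans ?_
  rw [sup_comm]
  exact symm (reflTransGen_sup_outStar (fun _ => .inl rfl) (rootedBy_outStar s) le_sup_right hs')

theorem exists_forall_not_subset_pair [Fintype V] (hV : 2 < Fintype.card V) (T : Set V) :
    ∃ s, ∀ a, s ∈ T → ¬ T ⊆ {s, a} := by
  by_cases h : ∃ s, s ∉ T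
  · obtain ⟨s, hs⟩ := h
    exact ⟨s, fun _ hsT => absurd hsT hs⟩
  obtain ⟨a, b, c, hab, hac, hbc⟩ := Fintype.two_lt_card_iff.mp hV
  push Not at h
  exact ⟨a, fun x _ hT => by grind [hT (h b), hT (h c)]⟩

end Avoiding

theorem exists_mem_imp_not_subset {R T : Set V} (hR : R.Nonempty) (hne : T ≠ R) :
    ∃ r ∈ R, r ∈ T → ¬ T ⊆ R := by
  by_cases hTR : T ⊆ R
  · obtain ⟨r, hr, hrT⟩ := Set.not_subset.mp fun hRT => hne (hTR.antisymm hRT)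
    exact ⟨r, hr, fun h => absurd h hrT⟩
  · obtain ⟨r, hr⟩ := hR
    exact ⟨r, hr, fun _ => hTR⟩

end

/-- For `n > 2`: between any two rooted graphs `G`, `G'` (with self-loops, roots
`R`, `R'`) there is a sequence of rooted graphs leading from `G` to `G'`,
changing one edge at a time, that avoids any prescribed root component
`R'' ∉ {R, R'}`. -/
theorem increment_root_grid {V : Type*} [Fintype V]
    (n : ℕ) (hcard : Fintype.card V = n) (hn : 2 < n)
    (G G' : V → V → Prop) (hGself : ∀ p, G p p) (hG'self : ∀ p, G' p p)
    (R R' : Set V)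
    (hR : IsRootComp G R) (hRu : ∀ S : Set V, IsRootComp G S → S = R)
    (hR' : IsRootComp G' R') (hR'u : ∀ S : Set V, IsRootComp G' S → S = R')
    (R'' : Set V) (hne : R'' ≠ R) (hne' : R'' ≠ R') :
    ∃ (k : ℕ) (Gs : ℕ → V → V → Prop),
      Gs 0 = G ∧ Gs k = G' ∧
      (∀ i ≤ k, (∀ p, Gs i p p) ∧
        ∃ Ri : Set V, IsRootComp (Gs i) Ri ∧
          (∀ S : Set V, IsRootComp (Gs i) S → S = Ri) ∧ Ri ≠ R'') ∧
      (∀ i < k, DifferOneEdge (Gs i) (Gs (i + 1))) := by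
  obtain ⟨r, hrR, hr⟩ := exists_mem_imp_not_subset hR.1 hne
  obtain ⟨r', hr'R', hr'⟩ := exists_mem_imp_not_subset hR'.1 hne'
  obtain ⟨s, hs⟩ := exists_forall_not_subset_pair (hcard ▸ hn) R''
  have hGr := rootedBy_of_unique hRu hrR
  have hG'r' := rootedBy_of_unique hR'u hr'R'
  have hG : ReflTransGen (OneEdgeStep (IsRootedAvoiding R'')) G (outStar r) :=
    reflTransGen_outStar_of_rootedBy hGself hGr (eq_rootSet_of_isRootComp hGr hR ▸ hr)
  have hG' : ReflTransGen (OneEdgeStep (IsRootedAvoiding R'')) G' (outStar r') :=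
    reflTransGen_outStar_of_rootedBy hG'self hG'r' (eq_rootSet_of_isRootComp hG'r' hR' ▸ hr')
  have hrs := reflTransGen_outStar_outStar
    (fun h hsub => hr h (hsub.trans (Set.singleton_subset_iff.mpr hrR))) (hs r)
  have hr's := reflTransGen_outStar_outStar
    (fun h hsub => hr' h (hsub.trans (Set.singleton_subset_iff.mpr hr'R'))) (hs r')
  exact exists_seq_of_reflTransGen_oneEdgeStep ⟨hGself, R, hR, hRu, hne.symm⟩
    (hG.trans <| hrs.trans <| (symm hr's).trans (symm hG'))
end

section
/- Let Π be a finite set with |Π| > 2, let R and R' be nonempty subsets of Π, and let R'' be a subset of Π with R'' ≠ R and R'' ≠ R'. Then there exists a finite sequence R = R_1, R_2, …, R_l = R' of nonempty subsets of Π such that R_i ≠ R'' for every i and, for every 1 ≤ i < l, the sets R_i and R_{i+1} differ in exactly one element (the symmetric difference of R_i and R_{i+1} has cardinality 1). -/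
section Aux

variable {Proc : Type*} [Fintype Proc]

/-- A path of nonempty sets avoiding `B`, each step differing in one element. -/
def GoodPath (B R R' : Set Proc) : Prop :=
  ∃ (k : ℕ) (f : ℕ → Set Proc),
    f 0 = R ∧ f k = R' ∧
    (∀ i ≤ k, (f i).Nonempty ∧ f i ≠ B) ∧
    (∀ i < k, (symmDiff (f i) (f (i + 1))).ncard = 1)

lemma gp_refl {B R : Set Proc} (h1 : R.Nonempty) (h2 : R ≠ B) : GoodPath B R R :=
  ⟨0, fun _ => R, rfl, rfl, fun _ _ => ⟨h1, h2⟩, fun i hi => by omega⟩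

lemma gp_right_good {B R R' : Set Proc} (h : GoodPath B R R') :
    R'.Nonempty ∧ R' ≠ B := by
  obtain ⟨k, f, h0, hk, hg, hs⟩ := h
  exact hk ▸ hg k le_rfl

lemma gp_symm {B R R' : Set Proc} (h : GoodPath B R R') : GoodPath B R' R := by
  obtain ⟨k, f, h0, hk, hg, hs⟩ := h
  refine ⟨k, fun i => f (k - i), by simpa, ?_,
    fun i hi => hg _ (by omega), fun i hi => ?_⟩
  · show f (k - k) = R
    rw [Nat.sub_self]; exact h0
  show (symmDiff (f (k - i)) (f (k - (i + 1)))).ncard = 1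
  have h1 : k - i = (k - (i + 1)) + 1 := by omega
  rw [h1, symmDiff_comm]
  exact hs _ (by omega)

lemma gp_trans {B R S T : Set Proc} (h1 : GoodPath B R S) (h2 : GoodPath B S T) :
    GoodPath B R T := by
  obtain ⟨k1, f1, f10, f1k, g1, s1⟩ := h1
  obtain ⟨k2, f2, f20, f2k, g2, s2⟩ := h2
  refine ⟨k1 + k2, fun i => if i ≤ k1 then f1 i else f2 (i - k1), by simp [f10], ?_, ?_, ?_⟩
  · show (if k1 + k2 ≤ k1 then f1 (k1 + k2) else f2 (k1 + k2 - k1)) = T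
    by_cases hk : k2 = 0
    · subst hk
      simp only [Nat.add_zero, if_pos le_rfl]
      rw [f1k, ← f20, f2k]
    · have hn : ¬ (k1 + k2 ≤ k1) := by omega
      rw [if_neg hn]
      have : k1 + k2 - k1 = k2 := by omega
      rw [this, f2k]
  · intro i hi
    show (if i ≤ k1 then f1 i else f2 (i - k1)).Nonempty ∧
      (if i ≤ k1 then f1 i else f2 (i - k1)) ≠ B
    by_cases hik : i ≤ k1
    · rw [if_pos hik]; exact g1 i hik
    · rw [if_neg hik]; exact g2 _ (by omega)
  · intro i hi
    show (symmDiff (if i ≤ k1 then f1 i else f2 (i - k1))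
      (if i + 1 ≤ k1 then f1 (i + 1) else f2 (i + 1 - k1))).ncard = 1
    by_cases hik : i + 1 ≤ k1
    · rw [if_pos (by omega : i ≤ k1), if_pos hik]
      exact s1 i (by omega)
    · by_cases hik2 : i ≤ k1
      · -- i = k1
        have hieq : i = k1 := by omega
        rw [if_pos hik2, if_neg hik]
        have h1 : f1 i = f2 0 := by rw [hieq, f1k, f20]
        have h2 : i + 1 - k1 = 0 + 1 := by omega
        rw [h1, h2]
        exact s2 0 (by omega)
      · rw [if_neg hik2, if_neg (by omega : ¬ i + 1 ≤ k1)]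
        have h2 : i + 1 - k1 = (i - k1) + 1 := by omega
        rw [h2]
        exact s2 _ (by omega)

lemma sd_diff {R : Set Proc} {p : Proc} (hp : p ∈ R) :
    symmDiff R (R \ {p}) = ({p} : Set Proc) := by
  ext x
  simp only [Set.mem_symmDiff, Set.mem_diff, Set.mem_singleton_iff]
  constructor
  · rintro (⟨hx, h⟩ | ⟨⟨hx, h⟩, h'⟩)
    · by_contra hxp; exact h ⟨hx, hxp⟩
    · exact absurd hx h'
  · rintro rfl; exact Or.inl ⟨hp, fun h => h.2 rfl⟩

lemma sd_insert {R : Set Proc} {p : Proc} (hp : p ∉ R) :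
    symmDiff R (insert p R) = ({p} : Set Proc) := by
  ext x
  simp only [Set.mem_symmDiff, Set.mem_insert_iff, Set.mem_singleton_iff]
  constructor
  · rintro (⟨hx, h⟩ | ⟨hx | hx, h⟩)
    · exact absurd (Or.inr hx) h
    · exact hx
    · exact absurd hx h
  · rintro rfl; exact Or.inr ⟨Or.inl rfl, hp⟩

lemma gp_step {B R R' : Set Proc} (hR : R.Nonempty) (hRB : R ≠ B)
    (hR' : R'.Nonempty) (hR'B : R' ≠ B) (hd : (symmDiff R R').ncard = 1) :
    GoodPath B R R' := by
  refine ⟨1, fun i => if i = 0 then R else R', by simp, by simp, ?_, ?_⟩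
  · intro i _
    by_cases h : i = 0 <;> simp [h, hR, hRB, hR', hR'B]
  · intro i hi
    interval_cases i
    simpa using hd

/-- Chain down to a singleton, all sets containing `q` and staying inside `R`. -/
lemma gp_down {B : Set Proc} {q : Proc} :
    ∀ (R : Set Proc), q ∈ R → (∀ S, q ∈ S → S ⊆ R → S ≠ B) → GoodPath B R {q} := by
  have key : ∀ n (R : Set Proc), R.ncard = n → q ∈ R →
      (∀ S, q ∈ S → S ⊆ R → S ≠ B) → GoodPath B R {q} := by
    intro n
    induction n using Nat.strong_induction_on with
    | _ n ih =>
      intro R hcard hq hA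
      by_cases hsing : R = {q}
      · subst hsing
        exact gp_refl ⟨q, rfl⟩ (hA {q} rfl subset_rfl)
      · have hfin : R.Finite := Set.toFinite R
        have hsub : ¬ R ⊆ {q} := by
          intro hs
          exact hsing (subset_antisymm hs (Set.singleton_subset_iff.mpr hq))
        obtain ⟨p, hpR, hpq⟩ : ∃ p ∈ R, p ∉ ({q} : Set Proc) :=
          Set.not_subset.mp hsub
        have hpq' : p ≠ q := by simpa using hpq
        set R' := R \ {p} with hR'
        have hqR' : q ∈ R' := ⟨hq, fun h => hpq' (by simpa using h.symm)⟩
        have hR'sub : R' ⊆ R := Set.diff_subset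
        have hcard' : R'.ncard < n := by
          rw [← hcard]
          exact Set.ncard_lt_ncard (by
            constructor
            · exact hR'sub
            · intro hs
              exact (hs hpR).2 rfl) hfin
        have hstep : GoodPath B R R' := by
          refine gp_step ⟨q, hq⟩ (hA R hq subset_rfl) ⟨q, hqR'⟩
            (hA R' hqR' hR'sub) ?_
          rw [sd_diff hpR, Set.ncard_singleton]
        have hrest : GoodPath B R' {q} :=
          ih R'.ncard hcard' R' rfl hqR' (fun S hqS hSR' => hA S hqS (hSR'.trans hR'sub))
        exact gp_trans hstep hrest
  intro R hq hA
  exact key R.ncard R rfl hq hA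

lemma gp_to_singleton {B R : Set Proc} (hR : R.Nonempty) (hRB : R ≠ B) :
    ∃ q, GoodPath B R {q} := by
  by_cases hsub : ∃ q ∈ R, q ∉ B
  · obtain ⟨q, hqR, hqB⟩ := hsub
    exact ⟨q, gp_down R hqR (fun S hqS _ hSB => hqB (hSB ▸ hqS))⟩
  · push_neg at hsub
    obtain ⟨q, hqR⟩ := hR
    refine ⟨q, gp_down R hqR ?_⟩
    intro S hqS hSR hSB
    exact hRB (subset_antisymm hsub (hSB ▸ hSR))

lemma gp_sing_pair {B : Set Proc} {p q : Proc} (hpq : p ≠ q)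
    (hp : ({p} : Set Proc) ≠ B) (hq : ({q} : Set Proc) ≠ B)
    (hB : ({p, q} : Set Proc) ≠ B) : GoodPath B {p} {q} := by
  have hpair : ({p, q} : Set Proc).Nonempty := ⟨p, Or.inl rfl⟩
  have h1 : GoodPath B {p} {p, q} := by
    refine gp_step ⟨p, rfl⟩ hp hpair hB ?_
    have : ({p, q} : Set Proc) = insert q {p} := by
      ext x; simp [or_comm]
    rw [this, sd_insert (by simp [Ne.symm hpq]), Set.ncard_singleton]
  have h2 : GoodPath B {q} {p, q} := by
    refine gp_step ⟨q, rfl⟩ hq hpair hB ?_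
    have : ({p, q} : Set Proc) = insert p {q} := by ext x; simp
    rw [this, sd_insert (by simp [hpq]), Set.ncard_singleton]
  exact gp_trans h1 (gp_symm h2)

lemma gp_sing {B : Set Proc} (h : 2 < Fintype.card Proc) {p q : Proc}
    (hp : ({p} : Set Proc) ≠ B) (hq : ({q} : Set Proc) ≠ B) :
    GoodPath B {p} {q} := by
  by_cases hpq : p = q
  · subst hpq; exact gp_refl ⟨p, rfl⟩ hp
  by_cases hB : ({p, q} : Set Proc) = B
  · classical
    obtain ⟨r, hrp, hrq⟩ : ∃ r, r ≠ p ∧ r ≠ q := by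
      by_contra hc
      push_neg at hc
      have hsub : (Finset.univ : Finset Proc) ⊆ {p, q} := by
        intro r _
        rcases eq_or_ne r p with h' | h'
        · simp [h']
        · simp [hc r h']
      have := Finset.card_le_card hsub
      have h2 : ({p, q} : Finset Proc).card ≤ 2 :=
        (Finset.card_insert_le _ _).trans (by simp)
      rw [Finset.card_univ] at this
      omega
    have hr : r ∉ ({p, q} : Set Proc) := by
      intro hmem; rcases hmem with h' | h' <;> simp_all
    have hrB : ∀ S : Set Proc, r ∈ S → S ≠ B := by
      intro S hrS hSB
      rw [← hB] at hSB
      exact hr (hSB ▸ hrS)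
    have hpr : GoodPath B {p} {r} :=
      gp_sing_pair (Ne.symm hrp) hp (hrB {r} rfl) (hrB {p, r} (Or.inr rfl))
    have hrq' : GoodPath B {r} {q} :=
      gp_sing_pair hrq (hrB {r} rfl) hq (hrB {r, q} (Or.inl rfl))
    exact gp_trans hpr hrq'
  · exact gp_sing_pair hpq hp hq hB

end Aux

/-- In a finite set with more than two elements, any two nonempty subsets `R`, `R'`
are connected by a sequence of nonempty subsets, each differing from the next in
exactly one element, which avoids any prescribed subset `R'' ∉ {R, R'}`. -/
theorem subset_path_avoiding {Proc : Type*} [Fintype Proc] (h : 2 < Fintype.card Proc)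
    (R R' : Set Proc) (hR : R.Nonempty) (hR' : R'.Nonempty)
    (R'' : Set Proc) (hne : R'' ≠ R) (hne' : R'' ≠ R') :
    ∃ (k : ℕ) (f : ℕ → Set Proc),
      f 0 = R ∧ f k = R' ∧
      (∀ i ≤ k, (f i).Nonempty ∧ f i ≠ R'') ∧
      (∀ i < k, (symmDiff (f i) (f (i + 1))).ncard = 1) := by
  obtain ⟨p, hp⟩ := gp_to_singleton hR hne.symm
  obtain ⟨q, hq⟩ := gp_to_singleton hR' hne'.symm
  have hpB : ({p} : Set Proc) ≠ R'' := (gp_right_good hp).2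
  have hqB : ({q} : Set Proc) ≠ R'' := (gp_right_good hq).2
  exact gp_trans (gp_trans hp (gp_sing h hpB hqB)) (gp_symm hq)
end

section
/- Let G be a rooted directed graph on a finite vertex set V containing all self-loops, with Root(G) = R, and let R' be a nonempty subset of V that differs from R in at most one element (the symmetric difference of R and R' has cardinality at most 1). Then for every rooted directed graph G' on V containing all self-loops with Root(G') = R', there exists a finite sequence of directed graphs G = G_1, G_2, …, G_j = G' on V, all containing all self-loops, such that every G_i is rooted, Root(G_i) ∈ {R, R'} for every i, and consecutive graphs of the sequence differ in exactly one (non-self-loop) edge. -/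
open Relation

namespace Relation.ReflTransGen

theorem exists_seq {α : Type*} {r : α → α → Prop} {a b : α} (h : ReflTransGen r a b) :
    ∃ (j : ℕ) (f : ℕ → α), f 0 = a ∧ f j = b ∧ ∀ i < j, r (f i) (f (i + 1)) := by
  induction h with
  | refl => exact ⟨0, fun _ => a, rfl, rfl, fun i hi => absurd hi (Nat.not_lt_zero i)⟩
  | @tail b c _ hbc ih =>
    obtain ⟨j, f, hf0, hfj, hf⟩ := ih
    refine ⟨j + 1, fun i => if i ≤ j then f i else c, by simpa using hf0, by simp, ?_⟩
    intro i hi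
    rcases Nat.lt_succ_iff_lt_or_eq.1 hi with hi | rfl
    · simpa [hi.le, Nat.succ_le_of_lt hi] using hf i hi
    · simpa [hfj] using hbc

end Relation.ReflTransGen

theorem Set.exists_eq_insert_or_eq_insert_of_subsingleton_symmDiff {α : Type*} {s t : Set α}
    (hs : s.Nonempty) (h : (symmDiff s t).Subsingleton) :
    ∃ x, t = insert x s ∨ s = insert x t := by
  rcases h.eq_empty_or_singleton with h | ⟨x, hx⟩
  · obtain ⟨x, hx⟩ := hs
    exact ⟨x, Or.inl (by rw [Set.insert_eq_of_mem hx, symmDiff_eq_bot.1 h])⟩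
  · have hmem : ∀ y, y ≠ x → (y ∈ s ↔ y ∈ t) := fun y hy => by
      have : y ∉ symmDiff s t := by simpa [hx] using hy
      rw [Set.mem_symmDiff] at this
      tauto
    have hx' : x ∈ symmDiff s t := by simp [hx]
    refine ⟨x, ?_⟩
    rw [Set.mem_symmDiff] at hx'
    rcases hx' with ⟨hxs, hxt⟩ | ⟨hxt, hxs⟩
    · right; ext y
      by_cases hy : y = x <;> simp_all
    · left; ext y
      by_cases hy : y = x <;> simp_all

section DirectedGraph

variable {V : Type*}

def NoEdgeInto (G : V → V → Prop) (S : Set V) : Prop :=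
  ∀ p q, G p q → q ∈ S → p ∈ S

theorem NoEdgeInto.anti {G H : V → V → Prop} {S : Set V} (hH : NoEdgeInto H S) (hGH : G ≤ H) :
    NoEdgeInto G S :=
  fun p q hpq => hH p q (hGH p q hpq)

theorem NoEdgeInto.mem_of_reflTransGen {G : V → V → Prop} {S : Set V} (hS : NoEdgeInto G S)
    {a b : V} (hab : ReflTransGen G a b) (hb : b ∈ S) : a ∈ S := by
  induction hab using ReflTransGen.head_induction_on with
  | refl => exact hb
  | head hac _ ih => exact hS _ _ hac ih

def IsRootedAt (G : V → V → Prop) (R : Set V) : Prop :=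
  IsRootComp G R ∧ ∀ v, ∃ r ∈ R, ReflTransGen G r v

theorem IsRootedAt.eq_of_isRootComp {G : V → V → Prop} {R S : Set V} (hR : IsRootedAt G R)
    (hS : IsRootComp G S) : S = R := by
  obtain ⟨⟨-, hRconn, hRin⟩, hreach⟩ := hR
  obtain ⟨⟨s, hs⟩, hSconn, hSin⟩ := hS
  obtain ⟨r, hr, hrs⟩ := hreach s
  have hrS : r ∈ S := NoEdgeInto.mem_of_reflTransGen hSin hrs hs
  apply Set.Subset.antisymm
  · exact fun s' hs' => NoEdgeInto.mem_of_reflTransGen hRin (hSconn s' hs' r hrS) hr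
  · exact fun r' hr' => NoEdgeInto.mem_of_reflTransGen hSin (hRconn r' hr' r hr) hrS

theorem exists_isRootComp_reflTransGen [Finite V] (G : V → V → Prop) (v : V) :
    ∃ S, IsRootComp G S ∧ ∃ x ∈ S, ReflTransGen G x v := by
  -- A vertex with the fewest ancestors among the ancestors of `v` lies in a root component.
  obtain ⟨x, hxv, hxmin⟩ := Set.exists_min_image {x | ReflTransGen G x v}
    (fun x => {y | ReflTransGen G y x}.ncard) (Set.toFinite _) ⟨v, ReflTransGen.refl⟩
  have hback : ∀ p, ReflTransGen G p x → ReflTransGen G x p := by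
    intro p hpx
    by_contra hxp
    have hlt : {y | ReflTransGen G y p}.ncard < {y | ReflTransGen G y x}.ncard :=
      Set.ncard_lt_ncard ⟨fun y hy => hy.trans hpx, fun h => hxp (h ReflTransGen.refl)⟩
    exact (hxmin p (hpx.trans hxv)).not_gt hlt
  refine ⟨{y | ReflTransGen G x y ∧ ReflTransGen G y x},
    ⟨⟨x, ReflTransGen.refl, ReflTransGen.refl⟩, fun u hu w hw => hu.2.trans hw.1, ?_⟩,
    x, ⟨ReflTransGen.refl, ReflTransGen.refl⟩, hxv⟩
  intro p q hpq hq
  have hpx : ReflTransGen G p x := ReflTransGen.head hpq hq.2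
  exact ⟨hback p hpx, hpx⟩

theorem isRootedAt_of_forall_isRootComp_eq [Finite V] {G : V → V → Prop} {R : Set V}
    (hR : IsRootComp G R) (hRu : ∀ S, IsRootComp G S → S = R) : IsRootedAt G R := by
  refine ⟨hR, fun v => ?_⟩
  obtain ⟨S, hS, hSv⟩ := exists_isRootComp_reflTransGen G v
  rwa [← hRu S hS]

theorem IsRootedAt.mono {G H : V → V → Prop} {R : Set V} (hR : IsRootedAt G R) (hGH : G ≤ H)
    (hH : NoEdgeInto H R) : IsRootedAt H R := by
  obtain ⟨⟨hne, hconn, -⟩, hreach⟩ := hR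
  refine ⟨⟨hne, fun u hu w hw => ReflTransGen.mono hGH _ _ (hconn u hu w hw), hH⟩,
    fun v => ?_⟩
  obtain ⟨r, hr, hrv⟩ := hreach v
  exact ⟨r, hr, ReflTransGen.mono hGH _ _ hrv⟩

def starGraph (S : Set V) : V → V → Prop := fun p q => p ∈ S ∨ p = q

theorem noEdgeInto_starGraph (S : Set V) : NoEdgeInto (starGraph S) S := by
  rintro p q (hp | rfl) hq
  exacts [hp, hq]

theorem isRootedAt_starGraph {S : Set V} (hS : S.Nonempty) :
    IsRootedAt (starGraph S) S := by
  obtain ⟨r, hr⟩ := hS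
  refine ⟨⟨⟨r, hr⟩, fun u hu _ _ => ?_, noEdgeInto_starGraph S⟩,
    fun _ => ⟨r, hr, ?_⟩⟩
  exacts [ReflTransGen.single (Or.inl hu), ReflTransGen.single (Or.inl hr)]

def EdgeFlip (P : (V → V → Prop) → Prop) (A B : V → V → Prop) : Prop :=
  P A ∧ P B ∧ DifferOneEdge A B

instance (P : (V → V → Prop) → Prop) : Std.Symm (EdgeFlip P) where
  symm _ _ := fun ⟨hA, hB, e, he, hAB⟩ => ⟨hB, hA, e, he, by rwa [symmDiff_comm]⟩

theorem edgeSet_or_eq (A : V → V → Prop) (e : V × V) :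
    edgeSet (fun p q => A p q ∨ (p, q) = e) = insert e (edgeSet A) := by
  ext ⟨p, q⟩
  simp [edgeSet, or_comm]

theorem reflTransGen_edgeFlip_of_le [Finite V] {P : (V → V → Prop) → Prop}
    {A B : V → V → Prop} (hAB : A ≤ B) (hA : ∀ p, A p p)
    (hP : ∀ K, A ≤ K → K ≤ B → P K) :
    ReflTransGen (EdgeFlip P) A B := by
  generalize hn : (edgeSet B \ edgeSet A).ncard = n
  induction n generalizing A with
  | zero =>
    have hBA : edgeSet B \ edgeSet A = ∅ := (Set.ncard_eq_zero (Set.toFinite _)).1 hn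
    have : A = B := le_antisymm hAB fun p q hpq => by
      by_contra h
      exact (Set.eq_empty_iff_forall_notMem.1 hBA) (p, q) ⟨hpq, h⟩
    rw [this]
  | succ n ih =>
    obtain ⟨e, heB, heA⟩ : (edgeSet B \ edgeSet A).Nonempty :=
      Set.nonempty_of_ncard_ne_zero (by omega)
    set A' : V → V → Prop := fun p q => A p q ∨ (p, q) = e
    have hAA' : A ≤ A' := fun p q h => Or.inl h
    have hA'B : A' ≤ B := by
      rintro p q (h | rfl)
      exacts [hAB p q h, heB]
    have hflip : EdgeFlip P A A' := by
      refine ⟨hP A le_rfl hAB, hP A' hAA' hA'B, e,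
        fun h => heA (show A e.1 e.2 from h ▸ hA e.1), ?_⟩
      rw [edgeSet_or_eq, symmDiff_of_le (Set.subset_insert _ _), Set.insert_sdiff_eq_singleton heA]
    refine ReflTransGen.head hflip (ih hA'B (fun p => hAA' p p (hA p))
      (fun K hK hKB => hP K (hAA'.trans hK) hKB) ?_)
    rw [edgeSet_or_eq, Set.insert_eq, Set.union_comm, ← Set.sdiff_sdiff,
      Set.ncard_sdiff_singleton_of_mem ((Set.mem_sdiff e).2 ⟨heB, heA⟩), hn, Nat.add_sub_cancel]

def Admissible (𝓡 : Set (Set V)) (K : V → V → Prop) : Prop :=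
  (∀ p, K p p) ∧ ∃ S ∈ 𝓡, IsRootedAt K S

theorem Admissible.mono {𝓡 𝓢 : Set (Set V)} (h : 𝓡 ⊆ 𝓢) {K : V → V → Prop}
    (hK : Admissible 𝓡 K) : Admissible 𝓢 K :=
  ⟨hK.1, hK.2.imp fun _ hS => ⟨h hS.1, hS.2⟩⟩

theorem reflTransGen_edgeFlip_admissible_mono {𝓡 𝓢 : Set (Set V)} (h : 𝓡 ⊆ 𝓢)
    {A B : V → V → Prop} (hAB : ReflTransGen (EdgeFlip (Admissible 𝓡)) A B) :
    ReflTransGen (EdgeFlip (Admissible 𝓢)) A B :=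
  ReflTransGen.mono (fun _ _ hflip => ⟨hflip.1.mono h, hflip.2.1.mono h, hflip.2.2⟩) _ _ hAB

theorem reflTransGen_edgeFlip_starGraph [Finite V] {H : V → V → Prop} {S : Set V}
    (hH : ∀ p, H p p) (hS : IsRootedAt H S) :
    ReflTransGen (EdgeFlip (Admissible {S})) H (starGraph S) := by
  have hclosed : NoEdgeInto (H ⊔ starGraph S) S := by
    rintro p q (h | h) hq
    exacts [hS.1.2.2 p q h hq, noEdgeInto_starGraph S p q h hq]
  have hup : ∀ K, H ≤ K → K ≤ H ⊔ starGraph S → Admissible {S} K := fun K hK hK' =>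
    ⟨fun p => hK p p (hH p), S, rfl, hS.mono hK (hclosed.anti hK')⟩
  have hdown : ∀ K, starGraph S ≤ K → K ≤ H ⊔ starGraph S → Admissible {S} K :=
    fun K hK hK' => ⟨fun p => hK p p (Or.inr rfl), S, rfl,
      (isRootedAt_starGraph hS.1.1).mono hK (hclosed.anti hK')⟩
  exact (reflTransGen_edgeFlip_of_le le_sup_left hH hup).trans
    (Std.Symm.symm _ _ (reflTransGen_edgeFlip_of_le le_sup_right (fun _ => Or.inr rfl) hdown))

theorem reflTransGen_edgeFlip_starGraph_insert [Finite V] {S : Set V} (hS : S.Nonempty)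
    (x : V) :
    ReflTransGen (EdgeFlip (Admissible {S, insert x S})) (starGraph S)
      (starGraph (insert x S)) := by
  obtain ⟨r, hr⟩ := hS
  set M : V → V → Prop := starGraph S ⊔ fun p q => p = x ∧ q = r
  have hM : IsRootedAt M (insert x S) := by
    refine ⟨⟨⟨x, Set.mem_insert _ _⟩, ?_, ?_⟩, fun _ => ⟨r, Set.mem_insert_of_mem _ hr,
      ReflTransGen.single (Or.inl (Or.inl hr))⟩⟩
    · rintro u (rfl | hu) w -
      · exact ReflTransGen.head (Or.inr ⟨rfl, rfl⟩) (ReflTransGen.single (Or.inl (Or.inl hr)))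
      · exact ReflTransGen.single (Or.inl (Or.inl hu))
    · rintro p q ((hp | rfl) | ⟨rfl, -⟩) hq
      exacts [Set.mem_insert_of_mem _ hp, hq, Set.mem_insert _ _]
  have hstarM : starGraph S ≤ M := le_sup_left
  have hMstar : M ≤ starGraph (insert x S) := by
    rintro p q ((hp | rfl) | ⟨rfl, -⟩)
    exacts [Or.inl (Set.mem_insert_of_mem _ hp), Or.inr rfl, Or.inl (Set.mem_insert _ _)]
  have hadd : ReflTransGen (EdgeFlip (Admissible {S, insert x S})) (starGraph S) M := by
    refine reflTransGen_edgeFlip_of_le hstarM (fun _ => Or.inr rfl) fun K hK hKM =>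
      ⟨fun p => hK p p (Or.inr rfl), ?_⟩
    -- The root switches from `S` to `insert x S` exactly when the edge `x → r` appears.
    by_cases hxr : K x r
    · have hKM' : K = M := le_antisymm hKM fun p q => by
        rintro (h | ⟨rfl, rfl⟩)
        exacts [hK p q h, hxr]
      exact ⟨insert x S, Or.inr rfl, hKM' ▸ hM⟩
    · refine ⟨S, Or.inl rfl, (isRootedAt_starGraph ⟨r, hr⟩).mono hK ?_⟩
      intro p q hpq hq
      rcases hKM p q hpq with h | ⟨rfl, rfl⟩
      exacts [noEdgeInto_starGraph S p q h hq, absurd hpq hxr]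
  have hrest : ReflTransGen (EdgeFlip (Admissible {S, insert x S})) M
      (starGraph (insert x S)) :=
    reflTransGen_edgeFlip_of_le hMstar (fun _ => Or.inl (Or.inr rfl)) fun K hK hK' =>
      ⟨fun p => hK p p (Or.inl (Or.inr rfl)), insert x S, Or.inr rfl,
        hM.mono hK ((noEdgeInto_starGraph _).anti hK')⟩
  exact hadd.trans hrest

end DirectedGraph

theorem single_step_root_transition_general {V : Type*} [Fintype V]
    (G : V → V → Prop) (hGself : ∀ p, G p p)
    (R : Set V) (hR : IsRootComp G R) (hRu : ∀ S : Set V, IsRootComp G S → S = R)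
    (R' : Set V) (hdiff : (symmDiff R R').ncard ≤ 1) :
    ∀ G' : V → V → Prop, (∀ p, G' p p) →
      IsRootComp G' R' → (∀ S : Set V, IsRootComp G' S → S = R') →
      ∃ (j : ℕ) (Gs : ℕ → V → V → Prop),
        Gs 0 = G ∧ Gs j = G' ∧
        (∀ i ≤ j, (∀ p, Gs i p p) ∧
          ∃ Ri : Set V, IsRootComp (Gs i) Ri ∧
            (∀ S : Set V, IsRootComp (Gs i) S → S = Ri) ∧ (Ri = R ∨ Ri = R')) ∧
        (∀ i < j, DifferOneEdge (Gs i) (Gs (i + 1))) := by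
  intro G' hG'self hR' hR'u
  have hGR := isRootedAt_of_forall_isRootComp_eq hR hRu
  have hG'R' := isRootedAt_of_forall_isRootComp_eq hR' hR'u
  have hstar : ReflTransGen (EdgeFlip (Admissible {R, R'})) (starGraph R) (starGraph R') := by
    obtain ⟨x, rfl | rfl⟩ := Set.exists_eq_insert_or_eq_insert_of_subsingleton_symmDiff hR.1
      (Set.ncard_le_one_iff_subsingleton.1 hdiff)
    · exact reflTransGen_edgeFlip_starGraph_insert hR.1 x
    · exact Std.Symm.symm _ _ (reflTransGen_edgeFlip_admissible_mono (Set.pair_comm _ _).le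
        (reflTransGen_edgeFlip_starGraph_insert hR'.1 x))
  have hG : ReflTransGen (EdgeFlip (Admissible {R, R'})) G (starGraph R) :=
    reflTransGen_edgeFlip_admissible_mono (by simp) (reflTransGen_edgeFlip_starGraph hGself hGR)
  have hG' : ReflTransGen (EdgeFlip (Admissible {R, R'})) G' (starGraph R') :=
    reflTransGen_edgeFlip_admissible_mono (by simp)
      (reflTransGen_edgeFlip_starGraph hG'self hG'R')
  obtain ⟨j, Gs, h0, hj, hstep⟩ := (hG.trans (hstar.trans (Std.Symm.symm _ _ hG'))).exists_seq
  refine ⟨j, Gs, h0, hj, fun i hi => ?_, fun i hi => (hstep i hi).2.2⟩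
  obtain ⟨hloops, S, hSRR', hS⟩ : Admissible {R, R'} (Gs i) := by
    rcases hi.lt_or_eq with hi | rfl
    exacts [(hstep i hi).1, hj ▸ ⟨hG'self, R', by simp, hG'R'⟩]
  exact ⟨hloops, S, hS.1, fun T hT => hS.eq_of_isRootComp hT, hSRR'⟩

/-- If `G` is rooted with root `R` and `R'` is a nonempty set differing from `R` in
at most one element, then every rooted graph `G'` with root `R'` can be reached
from `G` by changing one edge at a time, with all intermediate graphs rooted and
their root components among `{R, R'}`. -/
theorem single_step_root_transition {V : Type*} [Fintype V]
    (G : V → V → Prop) (hGself : ∀ p, G p p)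
    (R : Set V) (hR : IsRootComp G R) (hRu : ∀ S : Set V, IsRootComp G S → S = R)
    (R' : Set V) (hR'ne : R'.Nonempty) (hdiff : (symmDiff R R').ncard ≤ 1) :
    ∀ G' : V → V → Prop, (∀ p, G' p p) →
      IsRootComp G' R' → (∀ S : Set V, IsRootComp G' S → S = R') →
      ∃ (j : ℕ) (Gs : ℕ → V → V → Prop),
        Gs 0 = G ∧ Gs j = G' ∧
        (∀ i ≤ j, (∀ p, Gs i p p) ∧
          ∃ Ri : Set V, IsRootComp (Gs i) Ri ∧
            (∀ S : Set V, IsRootComp (Gs i) S → S = Ri) ∧ (Ri = R ∨ Ri = R')) ∧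
        (∀ i < j, DifferOneEdge (Gs i) (Gs (i + 1))) :=
  single_step_root_transition_general G hGself R hR hRu R' hdiff
end

section
/- Let G be a rooted directed graph on a finite vertex set V with at least 2 vertices, containing all self-loops, whose root component is a singleton Root(G) = {q}, and let p ∈ V with p ≠ q. Then the graph G' obtained from G by adding the edge (p,q) is rooted, and its root component Root(G') contains both p and q; in particular Root(G') ≠ {q}. -/
/-! In a finite graph every vertex is reached from a root component: the strong component of
a vertex that is minimal for reachability among those reaching `v` has no incoming edge.
So if `{q}` is the only root component, `q` reaches every vertex, and then the root
components of any graph containing `G` are exactly the set of vertices reaching `q`. -/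

namespace IsRootComp

open Relation

variable {V : Type*} {G : V → V → Prop}

theorem mem_of_reflTransGen {R : Set V} (hR : IsRootComp G R) {a b : V}
    (hab : ReflTransGen G a b) (hb : b ∈ R) : a ∈ R := by
  induction hab using ReflTransGen.head_induction_on with
  | refl => exact hb
  | head hac _ ih => exact hR.2.2 _ _ hac ih

theorem exists_reflTransGen_of_finite [Finite V] (G : V → V → Prop) (v : V) :
    ∃ u, IsRootComp G {w | ReflTransGen G u w ∧ ReflTransGen G w u} ∧ ReflTransGen G u v := by
  let below : V → V → Prop := fun a b => ReflTransGen G a b ∧ ¬ ReflTransGen G b a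
  have : IsTrans V below := ⟨fun _ _ _ ⟨hab, hba⟩ ⟨hbc, _⟩ =>
    ⟨hab.trans hbc, fun hca => hba (hbc.trans hca)⟩⟩
  have : Std.Irrefl below := ⟨fun _ h => h.2 h.1⟩
  obtain ⟨u, huv, hmin⟩ := (Finite.wellFounded_of_trans_of_irrefl below).has_min
    {w | ReflTransGen G w v} ⟨v, .refl⟩
  refine ⟨u, ⟨⟨u, .refl, .refl⟩, ?_, ?_⟩, huv⟩
  · rintro a ⟨-, hau⟩ b ⟨hub, -⟩
    exact hau.trans hub
  · rintro a b hab ⟨-, hbu⟩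
    have hau : ReflTransGen G a u := .head hab hbu
    exact ⟨not_not.mp fun hua => hmin a (hau.trans huv) ⟨hau, hua⟩, hau⟩

theorem reflTransGen_of_forall_eq_singleton [Finite V] {q : V}
    (hq : ∀ S : Set V, IsRootComp G S → S = {q}) (v : V) : ReflTransGen G q v := by
  obtain ⟨u, hu, huv⟩ := exists_reflTransGen_of_finite G v
  have huq : u ∈ ({q} : Set V) := hq _ hu ▸ ⟨.refl, .refl⟩
  exact huq ▸ huv

theorem setOf_reflTransGen {q : V} (hq : ∀ v, ReflTransGen G q v) :
    IsRootComp G {v | ReflTransGen G v q} :=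
  ⟨⟨q, .refl⟩, fun _ ha b _ => ha.trans (hq b), fun _ _ hab hb => .head hab hb⟩

theorem eq_setOf_reflTransGen {q : V} (hq : ∀ v, ReflTransGen G q v) {S : Set V}
    (hS : IsRootComp G S) :
    S = {v | ReflTransGen G v q} := by
  obtain ⟨s, hs⟩ := hS.1
  have hqS : q ∈ S := hS.mem_of_reflTransGen (hq s) hs
  ext v
  exact ⟨fun hv => hS.2.1 v hv q hqS, fun hv => hS.mem_of_reflTransGen hv hqS⟩

end IsRootComp

open Relation in
theorem add_edge_to_singleton_root_general {V : Type*} [Fintype V]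
    (G : V → V → Prop) (q : V)
    (hRu : ∀ S : Set V, IsRootComp G S → S = {q})
    (p : V) (hpq : p ≠ q) :
    ∃ R' : Set V,
      IsRootComp (fun u v => G u v ∨ (u = p ∧ v = q)) R' ∧
      (∀ S : Set V, IsRootComp (fun u v => G u v ∨ (u = p ∧ v = q)) S → S = R') ∧
      p ∈ R' ∧ q ∈ R' ∧ R' ≠ ({q} : Set V) := by
  set G' : V → V → Prop := fun u v => G u v ∨ (u = p ∧ v = q)
  have hreach : ∀ v, ReflTransGen G' q v := fun v =>
    ReflTransGen.mono (fun _ _ => Or.inl) _ _ (IsRootComp.reflTransGen_of_forall_eq_singleton hRu v)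
  have hp : ReflTransGen G' p q := .single (Or.inr ⟨rfl, rfl⟩)
  refine ⟨{v | ReflTransGen G' v q}, IsRootComp.setOf_reflTransGen hreach,
    fun S hS => hS.eq_setOf_reflTransGen hreach, hp, .refl, fun h => hpq ?_⟩
  simpa using (h ▸ hp : p ∈ ({q} : Set V))

/-- If `G` (with self-loops, at least 2 vertices) is rooted with singleton root
component `{q}` and `p ≠ q`, then the graph obtained by adding the edge `(p, q)`
is rooted and its root component contains both `p` and `q`; in particular it is
not `{q}`. -/
theorem add_edge_to_singleton_root {V : Type*} [Fintype V] (h2 : 2 ≤ Fintype.card V)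
    (G : V → V → Prop) (hself : ∀ p, G p p) (q : V)
    (hR : IsRootComp G {q}) (hRu : ∀ S : Set V, IsRootComp G S → S = {q})
    (p : V) (hpq : p ≠ q) :
    ∃ R' : Set V,
      IsRootComp (fun u v => G u v ∨ (u = p ∧ v = q)) R' ∧
      (∀ S : Set V, IsRootComp (fun u v => G u v ∨ (u = p ∧ v = q)) S → S = R') ∧
      p ∈ R' ∧ q ∈ R' ∧ R' ≠ ({q} : Set V) :=
  add_edge_to_singleton_root_general G q hRu p hpq
end

section
/- Let G be a rooted directed graph on a finite vertex set V containing all self-loops, and let q ∈ Root(G). Then the graph G' obtained from G by deleting every edge (p,q) with p ≠ q (keeping the self-loop (q,q)) is rooted with Root(G') = {q}. -/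
/-- If `G` (with self-loops) is rooted and `q` belongs to its root component, then
deleting every edge `(p, q)` with `p ≠ q` (keeping the self-loop at `q`) yields a
rooted graph whose root component is `{q}`. -/
theorem delete_in_edges_singleton_root {V : Type*} [Fintype V]
    (G : V → V → Prop) (hself : ∀ p, G p p)
    (R : Set V) (hR : IsRootComp G R) (hRu : ∀ S : Set V, IsRootComp G S → S = R)
    (q : V) (hq : q ∈ R) :
    IsRootComp (fun u v => G u v ∧ (v = q → u = q)) {q} ∧
    ∀ S : Set V, IsRootComp (fun u v => G u v ∧ (v = q → u = q)) S → S = {q} := by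
  classical
  set G' : V → V → Prop := fun u v => G u v ∧ (v = q → u = q) with hG'
  -- any G'-path into q starts at q
  have hinto : ∀ u, Relation.ReflTransGen G' u q → u = q := by
    intro u h
    induction h using Relation.ReflTransGen.head_induction_on with
    | refl => rfl
    | head hab _ ih => exact hab.2 ih
  -- G-paths from q lift to G'-paths
  have hlift : ∀ v, Relation.ReflTransGen G q v → Relation.ReflTransGen G' q v := by
    intro v h
    induction h with
    | refl => exact .refl
    | @tail b c _ hedge ih =>
      by_cases hv : c = q
      · subst hv; exact .refl
      · exact ih.tail ⟨hedge, fun h => absurd h hv⟩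
  -- every vertex is reachable from q in G
  have hreach : ∀ v, Relation.ReflTransGen G q v := by
    by_contra hcon
    push_neg at hcon
    obtain ⟨v0, hv0⟩ := hcon
    set T : Set V := {v | ¬ Relation.ReflTransGen G q v} with hT
    set B : V → Set V := fun v => {u | Relation.ReflTransGen G u v} with hB
    obtain ⟨v, hvT, hvmin⟩ :=
      Set.exists_min_image T (fun v => (B v).ncard) (Set.toFinite T) ⟨v0, hv0⟩
    -- B v is a root component of G
    have hroot : IsRootComp G (B v) := by
      refine ⟨⟨v, Relation.ReflTransGen.refl⟩, ?_, ?_⟩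
      · intro u hu w hw
        have hwT : w ∈ T := by
          intro hqw
          exact hvT (hqw.trans hw)
        have hsub : B w ⊆ B v := fun x hx => hx.trans hw
        have heq : B w = B v :=
          Set.eq_of_subset_of_ncard_le hsub (hvmin w hwT) (Set.toFinite _)
        rw [← heq] at hu
        exact hu
      · intro p r hpr hr
        exact Relation.ReflTransGen.head hpr hr
    have heqR := hRu (B v) hroot
    have hqB : q ∈ B v := heqR.symm ▸ hq
    exact hvT hqB
  -- S is closed under G'-paths into it
  have hclosed : ∀ (S : Set V), IsRootComp G' S →
      ∀ u w, Relation.ReflTransGen G' u w → w ∈ S → u ∈ S := by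
    intro S hS u w h hw
    induction h using Relation.ReflTransGen.head_induction_on with
    | refl => exact hw
    | head hab _ ih => exact hS.2.2 _ _ hab ih
  constructor
  · refine ⟨⟨q, rfl⟩, ?_, ?_⟩
    · intro u hu v hv
      rw [Set.mem_singleton_iff] at hu hv
      subst hu; subst hv; exact .refl
    · intro p r hpr hr
      rw [Set.mem_singleton_iff] at hr ⊢
      exact hpr.2 hr
  · intro S hS
    obtain ⟨s, hs⟩ := hS.1
    have hqS : q ∈ S := hclosed S hS q s (hlift s (hreach s)) hs
    ext x
    simp only [Set.mem_singleton_iff]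
    constructor
    · intro hx
      exact hinto x (hS.2.1 x hx q hqS)
    · intro hx; subst hx; exact hqS
end

section
/- Let n ≥ 2 and let G^1, G^2, …, G^{n-1} be directed graphs on a common vertex set V of n vertices, each containing all self-loops, and suppose there is a set R ⊆ V such that every G^i is rooted with Root(G^i) = R. Then for every q ∈ R and every p ∈ V, the edge (q,p) belongs to the compound graph G^1 ∘ G^2 ∘ ⋯ ∘ G^{n-1}. (This expresses that a stable root component broadcasts to the entire network within n-1 rounds, i.e., the dynamic diameter satisfies D ≤ n-1.) -/
/-- Extend a chain edge by one more round. -/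
lemma chain_snoc {V : Type*} {σ : ℕ → V → V → Prop} {k : ℕ} {q v w : V}
    (h : ChainEdge σ 0 k q v) (he : σ (k + 1) v w) : ChainEdge σ 0 (k + 1) q w := by
  obtain ⟨f, hf0, hfk, hf⟩ := h
  refine ⟨fun i => if i < k + 1 then f i else w, ?_, ?_, ?_⟩
  · simp [hf0]
  · simp
  · intro i _ hi
    by_cases h1 : i + 1 < k + 1
    · have h2 : i < k + 1 := by omega
      simp only [h1, h2, if_pos]
      exact hf i (Nat.zero_le _) (by omega)
    · have h2 : i = k := by omega
      subst h2
      simp [hfk, he]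

/-- In a finite digraph, any nonempty set closed under incoming edges
contains a root component. -/
lemma exists_root_in_closed {V : Type*} [Fintype V] (G : V → V → Prop)
    (T : Set V) (hne : T.Nonempty) (hcl : ∀ p q : V, G p q → q ∈ T → p ∈ T) :
    ∃ R' : Set V, R' ⊆ T ∧ IsRootComp G R' := by
  classical
  let A : V → Finset V := fun v => Finset.univ.filter (fun w => Relation.ReflTransGen G w v)
  obtain ⟨t, ht⟩ := hne
  have hsne : (Finset.univ.filter (fun v => v ∈ T)).Nonempty :=
    ⟨t, by simp [ht]⟩
  obtain ⟨v, hvmem, hmin⟩ := Finset.exists_min_image _ (fun v => (A v).card) hsne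
  have hvT : v ∈ T := by simpa using hvmem
  -- ancestors of `v` are in `T`
  have hanc : ∀ w : V, Relation.ReflTransGen G w v → w ∈ T := by
    intro w hw
    induction hw using Relation.ReflTransGen.head_induction_on with
    | refl => exact hvT
    | head hstep _ ih => exact hcl _ _ hstep ih
  refine ⟨{w | Relation.ReflTransGen G w v}, fun w hw => hanc w hw, ⟨v, Relation.ReflTransGen.refl⟩, ?_, ?_⟩
  · -- strong connectivity: it suffices that `v` reaches every ancestor `w`
    have key : ∀ w : V, Relation.ReflTransGen G w v → Relation.ReflTransGen G v w := by
      intro w hw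
      have hsub : A w ⊆ A v := by
        intro x hx
        simp only [A, Finset.mem_filter, Finset.mem_univ, true_and] at hx ⊢
        exact hx.trans hw
      have hwT : w ∈ T := hanc w hw
      have hle : (A v).card ≤ (A w).card := hmin w (by simp [hwT])
      have heq : A w = A v := Finset.eq_of_subset_of_card_le hsub hle
      have hvA : v ∈ A v := by
        simp [A, Relation.ReflTransGen.refl]
      rw [← heq] at hvA
      simpa [A] using hvA
    intro u hu w hw
    exact (hu : Relation.ReflTransGen G u v).trans (key w hw)
  · intro p w hpw hw
    exact Relation.ReflTransGen.head hpw hw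

/-- A stable root component broadcasts within `n - 1` rounds: if the graphs
`G^1, …, G^{n-1}` on `n` vertices (with self-loops) are all rooted with the same
root component `R`, then the compound graph `G^1 ∘ ⋯ ∘ G^{n-1}` has an edge
from every `q ∈ R` to every vertex `p`. -/
theorem stable_root_broadcast {V : Type*} [Fintype V]
    (n : ℕ) (hcard : Fintype.card V = n) (hn : 2 ≤ n)
    (σ : ℕ → V → V → Prop)
    (hself : ∀ i, 1 ≤ i → i ≤ n - 1 → ∀ p, σ i p p)
    (R : Set V)
    (hroot : ∀ i, 1 ≤ i → i ≤ n - 1 →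
      IsRootComp (σ i) R ∧ ∀ S : Set V, IsRootComp (σ i) S → S = R) :
    ∀ q ∈ R, ∀ p : V, ChainEdge σ 0 (n - 1) q p := by
  classical
  intro q hq p
  set m := n - 1 with hm
  have hm1 : 1 ≤ m := by omega
  have hcardm : Fintype.card V = m + 1 := by omega
  let S : ℕ → Finset V := fun k => Finset.univ.filter (fun v => ChainEdge σ 0 k q v)
  have hq0 : q ∈ S 0 := by
    simp only [S, Finset.mem_filter, Finset.mem_univ, true_and]
    exact ⟨fun _ => q, rfl, rfl, fun i h1 h2 => absurd h2 (by omega)⟩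
  have hmono : ∀ k, k + 1 ≤ m → S k ⊆ S (k + 1) := by
    intro k hk v hv
    simp only [S, Finset.mem_filter, Finset.mem_univ, true_and] at hv ⊢
    exact chain_snoc hv (hself (k + 1) (by omega) (by omega) v)
  have hqk : ∀ k, k ≤ m → q ∈ S k := by
    intro k
    induction k with
    | zero => intro _; exact hq0
    | succ k ih => intro hk; exact hmono k hk (ih (by omega))
  -- if the reached set stops growing, it is everything
  have hstep : ∀ k, k + 1 ≤ m → S (k + 1) = S k → S k = Finset.univ := by
    intro k hk heq
    by_contra hne
    have hTne : (↑(S k)ᶜ : Set V).Nonempty := by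
      have : (S k)ᶜ.Nonempty := by
        rw [Finset.nonempty_iff_ne_empty]
        simp only [ne_eq, Finset.compl_eq_empty_iff]
        exact hne
      obtain ⟨x, hx⟩ := this
      exact ⟨x, by simpa using hx⟩
    have hcl : ∀ a b : V, σ (k + 1) a b → b ∈ (↑(S k)ᶜ : Set V) → a ∈ (↑(S k)ᶜ : Set V) := by
      intro a b hab hb
      simp only [Finset.coe_compl, Set.mem_compl_iff, Finset.mem_coe] at hb ⊢
      intro ha
      apply hb
      rw [← heq]
      simp only [S, Finset.mem_filter, Finset.mem_univ, true_and] at ha ⊢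
      exact chain_snoc ha hab
    obtain ⟨R', hR'sub, hR'⟩ := exists_root_in_closed (σ (k + 1)) _ hTne hcl
    have hR'R : R' = R := (hroot (k + 1) (by omega) (by omega)).2 R' hR'
    have hqT : q ∈ (↑(S k)ᶜ : Set V) := hR'sub (hR'R ▸ hq)
    simp only [Finset.coe_compl, Set.mem_compl_iff, Finset.mem_coe] at hqT
    exact hqT (hqk k (by omega))
  -- cardinality grows
  have hgrow : ∀ k, k ≤ m → S k = Finset.univ ∨ k + 1 ≤ (S k).card := by
    intro k
    induction k with
    | zero => intro _; exact Or.inr (Finset.one_le_card.mpr ⟨q, hq0⟩)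
    | succ k ih =>
      intro hk
      rcases ih (by omega) with h | h
      · left
        exact Finset.univ_subset_iff.mp (h ▸ hmono k hk)
      · by_cases heq : S (k + 1) = S k
        · left
          rw [heq]
          exact hstep k hk heq
        · right
          have hss : S k ⊂ S (k + 1) := (Finset.ssubset_iff_of_subset (hmono k hk)).mpr
            (by
              rcases Finset.exists_of_ssubset (lt_of_le_of_ne (hmono k hk) (Ne.symm heq)) with ⟨x, hx1, hx2⟩
              exact ⟨x, hx1, hx2⟩)
          have := Finset.card_lt_card hss
          omega
  have hfin : S m = Finset.univ := by
    rcases hgrow m le_rfl with h | h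
    · exact h
    · apply Finset.eq_univ_of_card
      have hle : (S m).card ≤ Fintype.card V := Finset.card_le_univ _
      omega
  have hp : p ∈ S m := hfin ▸ Finset.mem_univ p
  simpa only [S, Finset.mem_filter, Finset.mem_univ, true_and] using hp
end

section
/- Let n ≥ 2 and let G^1, G^2, …, G^{n-1} be directed graphs on a common vertex set V of n vertices, each rooted and each containing all self-loops (their root components may differ from round to round). Then the compound graph G^1 ∘ G^2 ∘ ⋯ ∘ G^{n-1} is non-split: for all vertices p, q ∈ V there exists a vertex q' ∈ V such that both (q',p) and (q',q) are edges of the compound graph. -/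
open Relation in
/-- Any nonempty set closed under incoming edges contains a root component. -/
lemma exists_rootComp_subset {V : Type*} [Fintype V] (G : V → V → Prop)
    (S : Set V) (hne : S.Nonempty) (hcl : ∀ p q, G p q → q ∈ S → p ∈ S) :
    ∃ R, IsRootComp G R ∧ R ⊆ S := by
  classical
  obtain ⟨v, hv⟩ := hne
  have key : ∀ u ∈ S, ∀ w, ReflTransGen G w u → w ∈ S := by
    intro u hu w hw
    induction hw using ReflTransGen.head_induction_on with
    | refl => exact hu
    | head h _ ih => exact hcl _ _ h ih
  set A : Set V := {w | ReflTransGen G w v} with hAdef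
  have hAne : A.Nonempty := ⟨v, ReflTransGen.refl⟩
  obtain ⟨u, huA, hmin⟩ := Set.exists_min_image A
    (fun u => {w | ReflTransGen G w u}.ncard) (Set.toFinite A) hAne
  refine ⟨{w | ReflTransGen G w u}, ⟨⟨u, ReflTransGen.refl⟩, ?_, ?_⟩, ?_⟩
  · intro w1 h1 w2 h2
    have hw2A : w2 ∈ A := h2.trans huA
    have hsub : {w | ReflTransGen G w w2} ⊆ {w | ReflTransGen G w u} :=
      fun w hw => hw.trans h2
    have hle := hmin w2 hw2A
    have heq : {w | ReflTransGen G w w2} = {w | ReflTransGen G w u} :=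
      Set.eq_of_subset_of_ncard_le hsub hle (Set.toFinite _)
    have : w1 ∈ {w | ReflTransGen G w w2} := heq ▸ h1
    exact this
  · intro x y hxy hy
    exact ReflTransGen.head hxy hy
  · intro w hw
    exact key v hv w (hw.trans huA)

/-- The compound of `n - 1` rooted graphs (with self-loops, roots possibly varying)
on `n` vertices is non-split: any two vertices have a common in-neighbor in the
compound graph `G^1 ∘ ⋯ ∘ G^{n-1}`. -/
theorem compound_of_rooted_is_nonsplit {V : Type*} [Fintype V]
    (n : ℕ) (hcard : Fintype.card V = n) (hn : 2 ≤ n)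
    (σ : ℕ → V → V → Prop)
    (hself : ∀ i, 1 ≤ i → i ≤ n - 1 → ∀ p, σ i p p)
    (hrooted : ∀ i, 1 ≤ i → i ≤ n - 1 → ∃! R : Set V, IsRootComp (σ i) R) :
    ∀ p q : V, ∃ q' : V, ChainEdge σ 0 (n - 1) q' p ∧ ChainEdge σ 0 (n - 1) q' q := by
  classical
  intro p q
  set m := n - 1 with hm
  have hm1 : 1 ≤ m := by omega
  set S : ℕ → V → Set V := fun a r => {u | ChainEdge σ a m u r} with hSdef
  -- prepending one edge
  have cons : ∀ a, a < m → ∀ u w r, σ (a + 1) u w → w ∈ S (a + 1) r → u ∈ S a r := by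
    rintro a ha u w r hσ ⟨f, hfa, hfm, hf⟩
    refine ⟨fun i => if i = a then u else f i, by simp, ?_, ?_⟩
    · simp only [if_neg (by omega : m ≠ a)]; exact hfm
    · intro i hi1 hi2
      rcases eq_or_lt_of_le hi1 with h | h
      · subst h
        simp only [if_pos rfl, if_neg (by omega : a + 1 ≠ a)]
        rw [hfa]; exact hσ
      · simp only [if_neg (by omega : i ≠ a), if_neg (by omega : i + 1 ≠ a)]
        exact hf i (by omega) hi2
  have hmono : ∀ a, a < m → ∀ r, S (a + 1) r ⊆ S a r := by
    intro a ha r u hu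
    exact cons a ha u u r (hself (a + 1) (by omega) (by omega) u) hu
  have hmono' : ∀ (d a : ℕ), a + d ≤ m → ∀ r, S (a + d) r ⊆ S a r := by
    intro d
    induction d with
    | zero => intro a _ r; simp
    | succ d ih =>
        intro a h r
        have h1 : S (a + (d + 1)) r ⊆ S (a + 1) r := by
          have := ih (a + 1) (by omega) r
          rwa [show a + 1 + d = a + (d + 1) by omega] at this
        exact h1.trans (hmono a (by omega) r)
  have hbase : ∀ r : V, S m r = {r} := by
    intro r
    ext u
    simp only [hSdef, Set.mem_setOf_eq, Set.mem_singleton_iff]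
    constructor
    · rintro ⟨f, h1, h2, -⟩; rw [← h1]; exact h2
    · rintro rfl
      exact ⟨fun _ => u, rfl, rfl, fun i h1 h2 => absurd h2 (by omega)⟩
  have hself_mem : ∀ a, a ≤ m → ∀ r : V, r ∈ S a r := by
    intro a ha r
    have h1 : r ∈ S m r := by rw [hbase r]; exact rfl
    have h2 := hmono' (m - a) a (by omega) r
    rw [show a + (m - a) = m by omega] at h2
    exact h2 h1
  by_cases hsplit : ∃ a, a < m ∧ S a p = S (a + 1) p ∧ S a q = S (a + 1) q
  · obtain ⟨a, ha, hp, hq⟩ := hsplit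
    have hclp : ∀ x y, σ (a + 1) x y → y ∈ S (a + 1) p → x ∈ S (a + 1) p := by
      intro x y h1 h2; rw [← hp]; exact cons a ha x y p h1 h2
    have hclq : ∀ x y, σ (a + 1) x y → y ∈ S (a + 1) q → x ∈ S (a + 1) q := by
      intro x y h1 h2; rw [← hq]; exact cons a ha x y q h1 h2
    obtain ⟨R1, hR1, hR1S⟩ := exists_rootComp_subset (σ (a + 1)) (S (a + 1) p)
      ⟨p, hself_mem (a + 1) (by omega) p⟩ hclp
    obtain ⟨R2, hR2, hR2S⟩ := exists_rootComp_subset (σ (a + 1)) (S (a + 1) q)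
      ⟨q, hself_mem (a + 1) (by omega) q⟩ hclq
    obtain ⟨R, hR, hRuniq⟩ := hrooted (a + 1) (by omega) (by omega)
    have heq : R1 = R2 := (hRuniq R1 hR1).trans (hRuniq R2 hR2).symm
    obtain ⟨r, hr⟩ := hR1.1
    have hrp : r ∈ S 0 p := by
      have := hmono' (a + 1) 0 (by omega) p
      rw [zero_add] at this
      exact this (hR1S hr)
    have hrq : r ∈ S 0 q := by
      have := hmono' (a + 1) 0 (by omega) q
      rw [zero_add] at this
      exact this (hR2S (heq ▸ hr))
    exact ⟨r, hrp, hrq⟩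
  · push_neg at hsplit
    have hgrow : ∀ k, k ≤ m →
        2 + k ≤ (S (m - k) p).ncard + (S (m - k) q).ncard := by
      intro k
      induction k with
      | zero =>
          intro _
          rw [Nat.sub_zero, hbase, hbase, Set.ncard_singleton, Set.ncard_singleton]
      | succ k ih =>
          intro hk
          set a := m - (k + 1) with hadef
          have ha : a < m := by omega
          have ha1 : a + 1 = m - k := by omega
          have hcount : ∀ r : V, S a r ≠ S (a + 1) r →
              (S (a + 1) r).ncard + 1 ≤ (S a r).ncard := by
            intro r hne
            have hss : S (a + 1) r ⊂ S a r :=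
              ⟨hmono a ha r, fun h => hne (subset_antisymm h (hmono a ha r))⟩
            exact Set.ncard_lt_ncard hss (Set.toFinite _)
          have hone : (S (a + 1) p).ncard + (S (a + 1) q).ncard + 1 ≤
              (S a p).ncard + (S a q).ncard := by
            by_cases hp' : S a p = S (a + 1) p
            · have hq' := hsplit a ha hp'
              have h1 := hcount q hq'
              have h2 : (S (a + 1) p).ncard ≤ (S a p).ncard :=
                Set.ncard_le_ncard (hmono a ha p) (Set.toFinite _)
              omega
            · have h1 := hcount p hp'
              have h2 : (S (a + 1) q).ncard ≤ (S a q).ncard :=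
                Set.ncard_le_ncard (hmono a ha q) (Set.toFinite _)
              omega
          have ihk := ih (by omega)
          rw [← ha1] at ihk
          omega
    have hfin := hgrow m le_rfl
    rw [Nat.sub_self] at hfin
    have hU : (S 0 p ∪ S 0 q).ncard ≤ n := by
      have h := Set.ncard_le_ncard (Set.subset_univ (S 0 p ∪ S 0 q)) (Set.toFinite _)
      rwa [Set.ncard_univ, Nat.card_eq_fintype_card, hcard] at h
    have hI := Set.ncard_union_add_ncard_inter (S 0 p) (S 0 q)
    have hne : (S 0 p ∩ S 0 q).Nonempty := by
      apply Set.nonempty_of_ncard_ne_zero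
      omega
    obtain ⟨r, hr1, hr2⟩ := hne
    exact ⟨r, hr1, hr2⟩
end

section
/- Let n ≥ 2 and let (G^r)_{r ≥ 1} be an infinite sequence of directed graphs on a common vertex set V of n vertices, each rooted and each containing all self-loops. Define the compound sequence (G̃^r)_{r ≥ 1} by G̃^r = G^{(r-1)(n-1)+1} ∘ G^{(r-1)(n-1)+2} ∘ ⋯ ∘ G^{r(n-1)}. Suppose there exist a round a ≥ 1, an integer y ≥ n-1, and a set R ⊆ V such that Root(G^i) = R for all a ≤ i ≤ a+y-1. Then there exist at least ⌊(y-n+1)/(n-1)⌋ consecutive indices r such that for every q ∈ R and every p ∈ V the edge (q,p) belongs to G̃^r (i.e., the compound graph G̃^r contains the star graph centered at each q ∈ R). -/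
open Relation

lemma chain_refl {V : Type*} (σ : ℕ → V → V → Prop) (a : ℕ) (p : V) :
    ChainEdge σ a a p p :=
  ⟨fun _ => p, rfl, rfl, fun i h1 h2 => absurd (lt_of_le_of_lt h1 h2) (lt_irrefl _)⟩

lemma chain_snoc_s13 {V : Type*} {σ : ℕ → V → V → Prop} {a b : ℕ} {p q r : V}
    (h : ChainEdge σ a b p q) (hab : a ≤ b) (e : σ (b + 1) q r) :
    ChainEdge σ a (b + 1) p r := by
  obtain ⟨f, hfa, hfb, hf⟩ := h
  refine ⟨fun i => if i = b + 1 then r else f i, ?_, ?_, ?_⟩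
  · simp only [show a ≠ b + 1 by omega, if_false]; exact hfa
  · simp
  · intro i h1 h2
    by_cases hib : i = b
    · simp only [hib, show b ≠ b + 1 by omega, if_false, if_pos rfl]
      exact hfb ▸ e
    · have h2' : i < b := by omega
      simp only [show i ≠ b + 1 by omega, show i + 1 ≠ b + 1 by omega, if_false]
      exact hf i h1 h2'

lemma boundary {V : Type*} {G : V → V → Prop} {S : Set V} {x v : V}
    (h : ReflTransGen G x v) (hx : x ∈ S) (hv : v ∉ S) :
    ∃ p q, G p q ∧ p ∈ S ∧ q ∉ S := by
  induction h with
  | refl => exact absurd hx hv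
  | @tail b c hxb hbc ih =>
    by_cases hb : b ∈ S
    · exact ⟨b, c, hbc, hb, hv⟩
    · exact ih hb

lemma exists_rootcomp_reaching {V : Type*} [Fintype V] (G : V → V → Prop) (v : V) :
    ∃ R' : Set V, IsRootComp G R' ∧ ∀ u ∈ R', ReflTransGen G u v := by
  classical
  let P : V → Set V := fun u => {w | ReflTransGen G w u}
  have hA : (P v).Nonempty := ⟨v, ReflTransGen.refl⟩
  obtain ⟨u, hu, hmin⟩ :=
    Set.exists_min_image (P v) (fun u => (P u).ncard) (Set.toFinite _) hA
  refine ⟨P u, ⟨⟨u, ReflTransGen.refl⟩, ?_, ?_⟩, fun w hw => hw.trans hu⟩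
  · intro w1 hw1 w2 hw2
    have hsub : P w2 ⊆ P u := fun z hz => hz.trans hw2
    have hle : (P u).ncard ≤ (P w2).ncard := hmin w2 (hw2.trans hu)
    have heq : P w2 = P u := Set.eq_of_subset_of_ncard_le hsub hle (Set.toFinite _)
    have huw2 : ReflTransGen G u w2 := by
      have : u ∈ P w2 := heq ▸ (ReflTransGen.refl : ReflTransGen G u u)
      exact this
    exact hw1.trans huw2
  · intro p q hpq hq
    exact ReflTransGen.head hpq hq

lemma spread {V : Type*} [Fintype V] {n : ℕ} (hcard : Fintype.card V = n) (hn : 2 ≤ n)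
    (σ : ℕ → V → V → Prop) (m : ℕ) (R : Set V)
    (hloop : ∀ i, m < i → i ≤ m + (n - 1) → ∀ p, σ i p p)
    (hreach : ∀ i, m < i → i ≤ m + (n - 1) → ∀ r ∈ R, ∀ w, ReflTransGen (σ i) r w)
    {q : V} (hq : q ∈ R) (p : V) : ChainEdge σ m (m + (n - 1)) q p := by
  classical
  set S : ℕ → Set V := fun t => {x | ChainEdge σ m (m + t) q x} with hS
  have hstep : ∀ t x w, t + 1 ≤ n - 1 → x ∈ S t → σ (m + t + 1) x w → w ∈ S (t + 1) := by
    intro t x w ht hx e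
    have : ChainEdge σ m (m + t + 1) q w :=
      chain_snoc_s13 hx (Nat.le_add_right _ _) e
    simpa [hS, Nat.add_assoc] using this
  have hmono : ∀ t, t + 1 ≤ n - 1 → S t ⊆ S (t + 1) := by
    intro t ht x hx
    exact hstep t x x ht hx (hloop (m + t + 1) (by omega) (by omega) x)
  have hq0 : ∀ t, t ≤ n - 1 → q ∈ S t := by
    intro t ht
    induction t with
    | zero => exact chain_refl σ m q
    | succ t ih => exact hmono t ht (ih (by omega))
  have key : ∀ t, t ≤ n - 1 → S t = Set.univ ∨ t + 1 ≤ (S t).ncard := by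
    intro t ht
    induction t with
    | zero =>
      right
      exact Set.ncard_pos (Set.toFinite _) |>.mpr ⟨q, hq0 0 (by omega)⟩
    | succ t ih =>
      rcases ih (by omega) with h | h
      · left
        exact Set.eq_univ_of_univ_subset (h ▸ hmono t ht)
      · by_cases hu : S t = Set.univ
        · left
          exact Set.eq_univ_of_univ_subset (hu ▸ hmono t ht)
        · right
          obtain ⟨v, hv⟩ := Set.ne_univ_iff_exists_notMem _ |>.mp hu
          obtain ⟨x, w, e, hx, hw⟩ :=
            boundary (hreach (m + t + 1) (by omega) (by omega) q hq v)
              (hq0 t (by omega)) hv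
          have hss : S t ⊂ S (t + 1) :=
            (Set.ssubset_iff_of_subset (hmono t ht)).mpr
              ⟨w, hstep t x w ht hx e, hw⟩
          have := Set.ncard_lt_ncard hss (Set.toFinite _)
          omega
  rcases key (n - 1) le_rfl with h | h
  · have : p ∈ S (n - 1) := h ▸ Set.mem_univ p
    exact this
  · have hle : (S (n - 1)).ncard ≤ n := by
      have := Set.ncard_le_ncard (Set.subset_univ (S (n - 1))) (Set.toFinite _)
      rwa [Set.ncard_univ, Nat.card_eq_fintype_card, hcard] at this
    have heq : S (n - 1) = Set.univ := by
      apply Set.eq_of_subset_of_ncard_le (Set.subset_univ _) _ (Set.toFinite _)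
      rw [Set.ncard_univ, Nat.card_eq_fintype_card, hcard]
      omega
    have : p ∈ S (n - 1) := heq ▸ Set.mem_univ p
    exact this

/-- If an infinite sequence of rooted graphs (with self-loops) on `n` vertices has a
stable root component `R` during rounds `a, …, a + y - 1` with `y ≥ n - 1`, then the
compound sequence `G̃^r = G^{(r-1)(n-1)+1} ∘ ⋯ ∘ G^{r(n-1)}` contains at least
`⌊(y - n + 1)/(n - 1)⌋` consecutive compound graphs each of which contains the star
graph centered at every `q ∈ R` (an edge `(q, p)` for every vertex `p`). -/
theorem compound_sequence_stable_stars {V : Type*} [Fintype V]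
    (n : ℕ) (hcard : Fintype.card V = n) (hn : 2 ≤ n)
    (σ : ℕ → V → V → Prop)
    (hseq : ∀ r, 1 ≤ r → (∀ p, σ r p p) ∧ ∃! R : Set V, IsRootComp (σ r) R)
    (a y : ℕ) (ha : 1 ≤ a) (hy : n - 1 ≤ y)
    (R : Set V)
    (hstab : ∀ i, a ≤ i → i ≤ a + y - 1 →
      IsRootComp (σ i) R ∧ ∀ S : Set V, IsRootComp (σ i) S → S = R) :
    ∃ s : ℕ, 1 ≤ s ∧ ∀ r, s ≤ r → r < s + (y + 1 - n) / (n - 1) →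
      ∀ q ∈ R, ∀ p : V, ChainEdge σ ((r - 1) * (n - 1)) (r * (n - 1)) q p := by
  set m := n - 1 with hm
  have hm1 : 1 ≤ m := by omega
  set c := (a - 1 + (m - 1)) / m with hcdef
  set K := (y + 1 - n) / m with hKdef
  have hdm : m * c + (a - 1 + (m - 1)) % m = a - 1 + (m - 1) :=
    Nat.div_add_mod (a - 1 + (m - 1)) m
  have hmod : (a - 1 + (m - 1)) % m < m := Nat.mod_lt _ (by omega)
  have hc1 : a - 1 ≤ m * c := by omega
  have hc2 : m * c ≤ a - 1 + (m - 1) := by omega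
  have hK : K * m ≤ y + 1 - n := Nat.div_mul_le_self _ _
  clear_value c K
  clear hcdef hKdef
  refine ⟨c + 1, by omega, ?_⟩
  intro r hr1 hr2 q hq p
  have hrm : (r - 1) * m + m = r * m := by
    have h1 : r - 1 + 1 = r := by omega
    rw [← h1, Nat.add_mul, Nat.one_mul, h1]
  -- window bounds
  have hlow : a ≤ (r - 1) * m + 1 := by
    have : c * m ≤ (r - 1) * m := Nat.mul_le_mul_right m (by omega)
    have hcm : c * m = m * c := Nat.mul_comm _ _
    omega
  have hhigh : r * m ≤ a + y - 1 := by
    have h1 : r * m ≤ (c + K) * m := Nat.mul_le_mul_right m (by omega)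
    have h2 : (c + K) * m = c * m + K * m := Nat.add_mul _ _ _
    have hcm : c * m = m * c := Nat.mul_comm _ _
    omega
  have hsp := spread hcard hn σ ((r - 1) * m) R
    (fun i hi1 hi2 p => (hseq i (by omega)).1 p)
    (fun i hi1 hi2 r0 hr0 w => by
      have hia : a ≤ i := by omega
      have hib : i ≤ a + y - 1 := by
        have : i ≤ (r - 1) * m + m := by omega
        omega
      obtain ⟨hroot, huniq⟩ := hstab i hia hib
      obtain ⟨R', hR', hreach'⟩ := exists_rootcomp_reaching (σ i) w
      have := huniq R' hR'
      exact hreach' r0 (this ▸ hr0))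
    hq p
  rw [← hrm]
  exact hsp
end
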